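/- arXiv:1610.00278 — 10 statements merged into one kernel-verified Lean document; each statement's English description precedes it below -/
import Mathlib

section
/- For every real number σ with 1/2 < σ < 1 there exists a constant C_σ > 0 such that for every integer n ≥ 1 one has ∑_{m ∈ ℤ, |m| ≠ n} 1/|m² − n²|^σ ≤ C_σ / n^{2σ−1}. -/
open Finset Set in
private lemma mvt_rpow {p a b : ℝ} (hp : p ≠ 0) (ha : 0 ≤ a) (hab : a < b)
    (hcont : ContinuousOn (fun x : ℝ => x ^ p) (Icc a b)) :
    ∃ c ∈ Ioo a b, b ^ p - a ^ p = p * c ^ (p - 1) * (b - a) := by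
  obtain ⟨c, hc, heq⟩ := exists_hasDerivAt_eq_slope (fun x : ℝ => x ^ p)
    (fun x => p * x ^ (p - 1)) hab hcont
    (fun x hx => Real.hasDerivAt_rpow_const (Or.inl (ha.trans_lt hx.1).ne'))
  exact ⟨c, hc, by rw [heq, div_mul_cancel₀ _ (sub_ne_zero.2 hab.ne')]⟩

private lemma lemA {p : ℝ} (hp0 : 0 < p) (hp1 : p ≤ 1) {a b : ℝ} (ha : 0 ≤ a) (hab : a < b) :
    p * b ^ (p - 1) * (b - a) ≤ b ^ p - a ^ p := by
  obtain ⟨c, hc, heq⟩ := mvt_rpow hp0.ne' ha hab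
    (fun x hx => (Real.continuousAt_rpow_const x p (Or.inr hp0.le)).continuousWithinAt)
  rw [heq]
  have hc0 : 0 < c := lt_of_le_of_lt ha hc.1
  have : b ^ (p - 1) ≤ c ^ (p - 1) :=
    Real.rpow_le_rpow_of_nonpos hc0 hc.2.le (by linarith)
  have hba : 0 ≤ b - a := by linarith
  have := mul_le_mul_of_nonneg_right (mul_le_mul_of_nonneg_left this hp0.le) hba
  linarith

private lemma lemB {p : ℝ} (hp : p < 0) {a b : ℝ} (ha : 0 < a) (hab : a < b) :
    (-p) * b ^ (p - 1) * (b - a) ≤ a ^ p - b ^ p := by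
  obtain ⟨c, hc, heq⟩ := mvt_rpow hp.ne ha.le hab
    (fun x hx => (Real.continuousAt_rpow_const x p
      (Or.inl (ha.trans_le hx.1).ne')).continuousWithinAt)
  have hc0 : 0 < c := lt_trans ha hc.1
  have h1 : c ^ (p - 1) ≥ b ^ (p - 1) :=
    Real.rpow_le_rpow_of_nonpos hc0 hc.2.le (by linarith)
  have hba : 0 ≤ b - a := by linarith
  have h2 := mul_le_mul_of_nonneg_right (mul_le_mul_of_nonneg_left h1 (neg_nonneg.2 hp.le)) hba
  nlinarith [h2, heq]

private lemma factA {σ : ℝ} (hσ0 : 0 < σ) (hσ1 : σ < 1) (n : ℕ) :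
    ∑ j ∈ Finset.range n, ((j : ℝ) + 1) ^ (-σ) ≤ (n : ℝ) ^ (1 - σ) / (1 - σ) := by
  have h1σ : (0:ℝ) < 1 - σ := by linarith
  have key : ∀ j : ℕ, ((j:ℝ)+1) ^ (-σ)
      ≤ ((((j:ℕ)+1 : ℕ) : ℝ) ^ (1-σ) - ((j:ℕ) : ℝ) ^ (1-σ)) / (1-σ) := by
    intro j
    have h := lemA (p := 1-σ) h1σ (by linarith) (a := (j:ℝ)) (b := (j:ℝ)+1)
      (Nat.cast_nonneg j) (by linarith)
    rw [le_div_iff₀ h1σ]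
    have e : (1:ℝ) - σ - 1 = -σ := by ring
    rw [e] at h
    push_cast
    nlinarith [h]
  calc ∑ j ∈ Finset.range n, ((j:ℝ)+1) ^ (-σ)
      ≤ ∑ j ∈ Finset.range n,
        (((((j:ℕ)+1 : ℕ) : ℝ) ^ (1-σ) - ((j:ℕ) : ℝ) ^ (1-σ)) / (1-σ)) :=
        Finset.sum_le_sum fun j _ => key j
    _ = (∑ j ∈ Finset.range n,
        ((((j:ℕ)+1 : ℕ) : ℝ) ^ (1-σ) - ((j:ℕ) : ℝ) ^ (1-σ))) / (1-σ) := by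
        rw [Finset.sum_div]
    _ = ((n:ℝ) ^ (1-σ) - ((0:ℕ):ℝ) ^ (1-σ)) / (1-σ) := by
        rw [Finset.sum_range_sub (fun i : ℕ => ((i:ℕ):ℝ) ^ (1-σ))]
    _ = (n:ℝ) ^ (1-σ) / (1-σ) := by
        norm_num [Real.zero_rpow h1σ.ne']

private lemma factB {s : ℝ} (hs : 1 < s) (M : ℕ) (hM : 2 ≤ M) :
    ∑' k : ℕ, ((k:ℝ) + M) ^ (-s) ≤ ((M:ℝ) - 1) ^ (1-s) / (s-1) := by
  have hs1 : (0:ℝ) < s - 1 := by linarith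
  have hM1 : (1:ℝ) ≤ (M:ℝ) := by exact_mod_cast Nat.one_le_of_lt hM
  have hM2 : (2:ℝ) ≤ (M:ℝ) := by exact_mod_cast hM
  apply Real.tsum_le_of_sum_range_le (fun k => Real.rpow_nonneg (by positivity) _)
  intro N
  set t : ℕ → ℝ := fun k => ((k:ℝ) + M - 1) ^ (1-s) with ht
  have key : ∀ k : ℕ, ((k:ℝ) + M) ^ (-s) ≤ (t k - t (k+1)) / (s-1) := by
    intro k
    have h := lemB (p := 1-s) (by linarith) (a := (k:ℝ) + M - 1) (b := (k:ℝ) + M)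
      (by linarith [Nat.cast_nonneg (α := ℝ) k, hM2]) (by linarith)
    rw [le_div_iff₀ hs1]
    have e : (1:ℝ) - s - 1 = -s := by ring
    rw [e] at h
    rw [show ((k:ℝ) + M - ((k:ℝ) + M - 1)) = 1 from by ring, mul_one,
      show -((1:ℝ)-s) = s - 1 from by ring] at h
    simp only [ht]
    push_cast
    rw [show ((k:ℝ) + 1 + M - 1) = (k:ℝ) + M from by ring]
    linarith [h]
  calc ∑ k ∈ Finset.range N, ((k:ℝ) + M) ^ (-s)
      ≤ ∑ k ∈ Finset.range N, (t k - t (k+1)) / (s-1) :=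
        Finset.sum_le_sum fun k _ => key k
    _ = (∑ k ∈ Finset.range N, (t k - t (k+1))) / (s-1) := by rw [Finset.sum_div]
    _ = (t 0 - t N) / (s-1) := by rw [Finset.sum_range_sub' t]
    _ ≤ t 0 / (s-1) := by
        have : 0 ≤ t N := Real.rpow_nonneg (by push_cast; linarith [Nat.cast_nonneg (α := ℝ) N]) _
        gcongr
        linarith
    _ = ((M:ℝ) - 1) ^ (1-s) / (s-1) := by simp [ht]


/-- For every real `σ` with `1/2 < σ < 1` there is a constant `C_σ > 0` such that for every
integer `n ≥ 1`, `∑_{m ∈ ℤ, |m| ≠ n} 1/|m² − n²|^σ ≤ C_σ / n^(2σ−1)`. -/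
theorem stmt_0 (σ : ℝ) (hσ₁ : 1 / 2 < σ) (hσ₂ : σ < 1) :
    ∃ C : ℝ, 0 < C ∧ ∀ n : ℕ, 1 ≤ n →
      Summable (fun m : {m : ℤ // m.natAbs ≠ n} =>
        1 / |((m : ℤ) : ℝ) ^ 2 - (n : ℝ) ^ 2| ^ σ) ∧
      (∑' m : {m : ℤ // m.natAbs ≠ n}, 1 / |((m : ℤ) : ℝ) ^ 2 - (n : ℝ) ^ 2| ^ σ)
        ≤ C / (n : ℝ) ^ (2 * σ - 1) := by
  have hσ0 : (0:ℝ) < σ := by linarith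
  have h2σ : (1:ℝ) < 2 * σ := by linarith
  have h1σ : (0:ℝ) < 1 - σ := by linarith
  have hs1 : (0:ℝ) < 2 * σ - 1 := by linarith
  refine ⟨4 / (1 - σ) + 4 / (2 * σ - 1), by positivity, fun n hn => ?_⟩
  have hn0 : (0:ℝ) < (n:ℝ) := by exact_mod_cast hn
  have hn1 : (1:ℝ) ≤ (n:ℝ) := by exact_mod_cast hn
  set f : ℤ → ℝ := fun m => 1 / |((m : ℤ) : ℝ) ^ 2 - (n : ℝ) ^ 2| ^ σ with hf
  set s : Set ℤ := {m : ℤ | m.natAbs ≠ n} with hsdef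
  set G : ℕ → ℝ := fun k => if k = n then 0 else 1 / |((k:ℝ)) ^ 2 - (n : ℝ) ^ 2| ^ σ with hG
  -- indicator equals G on naturals
  have hFnat : ∀ k : ℕ, s.indicator f (k : ℤ) = G k := by
    intro k
    simp only [hG, Set.indicator_apply, hsdef, Set.mem_setOf_eq, Int.natAbs_natCast, hf]
    by_cases h : k = n <;> simp [h]
  have hFneg : ∀ m : ℤ, s.indicator f (-m) = s.indicator f m := by
    intro m
    simp only [Set.indicator_apply, hsdef, Set.mem_setOf_eq, Int.natAbs_neg, hf]
    norm_num
  have hG0 : ∀ k : ℕ, 0 ≤ G k := by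
    intro k
    simp only [hG]
    split <;> positivity
  -- bound for k ≤ 2n (in fact all k)
  have hG1 : ∀ k : ℕ, G k ≤ (n:ℝ) ^ (-σ) * |(k:ℝ) - n| ^ (-σ) := by
    intro k
    by_cases h : k = n
    · simp [hG, h, Real.zero_rpow (neg_ne_zero.2 hσ0.ne')]
    · simp only [hG, if_neg h]
      have hkn : ((k:ℝ)) ≠ (n:ℝ) := by exact_mod_cast fun hh => h (Nat.cast_injective hh)
      have habs : 0 < |(k:ℝ) - n| := abs_pos.2 (sub_ne_zero.2 hkn)
      have key : (n:ℝ) * |(k:ℝ) - n| ≤ |(k:ℝ) ^ 2 - (n:ℝ) ^ 2| := by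
        have e : (k:ℝ) ^ 2 - (n:ℝ) ^ 2 = ((k:ℝ) - n) * ((k:ℝ) + n) := by ring
        rw [e, abs_mul, mul_comm]
        have : (n:ℝ) ≤ |(k:ℝ) + n| := by
          rw [abs_of_pos (by positivity)]
          linarith [Nat.cast_nonneg (α := ℝ) k]
        exact mul_le_mul_of_nonneg_left this (abs_nonneg _)
      have h1 : ((n:ℝ) * |(k:ℝ) - n|) ^ σ ≤ |(k:ℝ) ^ 2 - (n:ℝ) ^ 2| ^ σ :=
        Real.rpow_le_rpow (by positivity) key hσ0.le
      have h2 : 1 / |(k:ℝ) ^ 2 - (n:ℝ) ^ 2| ^ σ ≤ 1 / ((n:ℝ) * |(k:ℝ) - n|) ^ σ :=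
        one_div_le_one_div_of_le (by positivity) h1
      calc 1 / |(k:ℝ) ^ 2 - (n:ℝ) ^ 2| ^ σ ≤ 1 / ((n:ℝ) * |(k:ℝ) - n|) ^ σ := h2
        _ = (n:ℝ) ^ (-σ) * |(k:ℝ) - n| ^ (-σ) := by
            rw [Real.mul_rpow hn0.le (abs_nonneg _), Real.rpow_neg hn0.le,
              Real.rpow_neg (abs_nonneg _)]
            rw [one_div, mul_inv]
  -- bound for k ≥ 2n+1
  have hG2 : ∀ k : ℕ, 2 * n + 1 ≤ k → G k ≤ 2 * (k:ℝ) ^ (-(2 * σ)) := by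
    intro k hk
    have hkn : k ≠ n := by omega
    have hkR : (2:ℝ) * n + 1 ≤ (k:ℝ) := by exact_mod_cast hk
    have hk0 : (0:ℝ) < (k:ℝ) := by linarith
    simp only [hG, if_neg hkn]
    have hsq : (k:ℝ) ^ 2 / 2 ≤ (k:ℝ) ^ 2 - (n:ℝ) ^ 2 := by nlinarith
    have habs : |(k:ℝ) ^ 2 - (n:ℝ) ^ 2| = (k:ℝ) ^ 2 - (n:ℝ) ^ 2 :=
      abs_of_pos (by nlinarith)
    have h1 : ((k:ℝ) ^ 2 / 2) ^ σ ≤ |(k:ℝ) ^ 2 - (n:ℝ) ^ 2| ^ σ := by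
      rw [habs]; exact Real.rpow_le_rpow (by positivity) hsq hσ0.le
    have h2 : 1 / |(k:ℝ) ^ 2 - (n:ℝ) ^ 2| ^ σ ≤ 1 / ((k:ℝ) ^ 2 / 2) ^ σ :=
      one_div_le_one_div_of_le (by positivity) h1
    refine h2.trans ?_
    have e1 : ((k:ℝ) ^ 2 / 2) ^ σ = (k:ℝ) ^ (2 * σ) / 2 ^ σ := by
      rw [Real.div_rpow (by positivity) (by norm_num), ← Real.rpow_natCast (k:ℝ) 2,
        ← Real.rpow_mul hk0.le]
      norm_num
    rw [e1, one_div_div]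
    rw [Real.rpow_neg hk0.le, ← div_eq_mul_inv]
    have h3 : (2:ℝ) ^ σ ≤ 2 := by
      calc (2:ℝ)^σ ≤ (2:ℝ)^(1:ℝ) := Real.rpow_le_rpow_of_exponent_le (by norm_num) (by linarith)
        _ = 2 := Real.rpow_one 2
    gcongr
  -- summability
  have hbase : Summable (fun k : ℕ => (k:ℝ) ^ (-(2 * σ))) :=
    Real.summable_nat_rpow.mpr (by linarith)
  have hshift : Summable (fun k : ℕ => 2 * ((k + (2*n+1) : ℕ):ℝ) ^ (-(2 * σ))) :=
    ((summable_nat_add_iff (2*n+1)).2 hbase).mul_left 2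
  have hGsum : Summable G := by
    rw [← summable_nat_add_iff (2*n+1)]
    exact Summable.of_nonneg_of_le (fun k => hG0 _) (fun k => hG2 _ (by omega)) hshift
  have hGsum1 : Summable (fun k : ℕ => G (k+1)) := (summable_nat_add_iff 1).2 hGsum
  have hFnatsum : Summable (fun k : ℕ => s.indicator f (k:ℤ)) :=
    hGsum.congr fun k => (hFnat k).symm
  have hFnegsum : Summable (fun k : ℕ => s.indicator f (-((k:ℤ)+1))) := by
    refine hGsum1.congr fun k => ?_
    rw [hFneg ((k:ℤ)+1), show ((k:ℤ)+1) = ((k+1:ℕ):ℤ) from by push_cast; ring, hFnat]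
  have hFsum : Summable (s.indicator f) := Summable.of_nat_of_neg_add_one hFnatsum hFnegsum
  have hsub : Summable (fun m : {m : ℤ // m.natAbs ≠ n} => f m) := by
    have := (summable_subtype_iff_indicator (s := s) (f := f)).2 hFsum
    exact this
  refine ⟨hsub, ?_⟩
  -- tsum computation
  have ht1 : (∑' m : {m : ℤ // m.natAbs ≠ n},
      1 / |((m : ℤ) : ℝ) ^ 2 - (n : ℝ) ^ 2| ^ σ) = ∑' m : ℤ, s.indicator f m :=
    tsum_subtype s f
  have ht2 : (∑' m : ℤ, s.indicator f m) = (∑' k : ℕ, G k) + ∑' k : ℕ, G (k+1) := by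
    rw [tsum_of_nat_of_neg_add_one hFnatsum hFnegsum]
    congr 1
    · exact tsum_congr hFnat
    · refine tsum_congr fun k => ?_
      rw [hFneg ((k:ℤ)+1), show ((k:ℤ)+1) = ((k+1:ℕ):ℤ) from by push_cast; ring, hFnat]
  have ht3 : (∑' k : ℕ, G (k+1)) ≤ ∑' k : ℕ, G k := by
    rw [Summable.tsum_eq_zero_add hGsum]
    linarith [hG0 0]
  have hsplit : (∑' k : ℕ, G k)
      = (∑ k ∈ Finset.range (2*n+1), G k) + ∑' k : ℕ, G (k + (2*n+1)) :=
    (Summable.sum_add_tsum_nat_add (2*n+1) hGsum).symm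
  -- finite part
  have hT : (∑ k ∈ Finset.range (2*n+1), |(k:ℝ) - n| ^ (-σ))
      ≤ 2 * ((n:ℝ) ^ (1-σ) / (1-σ)) := by
    rw [show 2*n+1 = n + (n+1) from by ring, Finset.sum_range_add]
    have eq1 : (∑ i ∈ Finset.range n, |(i:ℝ) - n| ^ (-σ))
        = ∑ j ∈ Finset.range n, ((j:ℝ)+1) ^ (-σ) := by
      rw [← Finset.sum_range_reflect (fun j => ((j:ℝ)+1) ^ (-σ)) n]
      refine Finset.sum_congr rfl fun i hi => ?_
      have hi' : i < n := Finset.mem_range.1 hi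
      have hiR : (i:ℝ) ≤ n := by exact_mod_cast hi'.le
      have h2 : ((n - 1 - i : ℕ):ℝ) = (n:ℝ) - 1 - i := by
        rw [Nat.sub_sub, Nat.cast_sub (by omega : 1 + i ≤ n)]
        push_cast; ring
      congr 1
      rw [h2, abs_of_nonpos (by linarith)]
      ring
    have eq2 : (∑ i ∈ Finset.range (n+1), |((n + i : ℕ):ℝ) - n| ^ (-σ))
        = ∑ j ∈ Finset.range n, ((j:ℝ)+1) ^ (-σ) := by
      rw [Finset.sum_range_succ' (fun i => |((n + i : ℕ):ℝ) - n| ^ (-σ)) n]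
      have g0 : |((n + 0 : ℕ):ℝ) - n| ^ (-σ) = 0 := by
        norm_num [Real.zero_rpow (neg_ne_zero.2 hσ0.ne')]
      rw [g0, add_zero]
      refine Finset.sum_congr rfl fun i _ => ?_
      congr 1
      push_cast
      rw [abs_of_nonneg (by linarith [Nat.cast_nonneg (α := ℝ) i])]
      ring
    rw [eq1, eq2]
    have := factA hσ0 hσ₂ n
    linarith
  have hfin : (∑ k ∈ Finset.range (2*n+1), G k) ≤ 2 / (1-σ) * (n:ℝ) ^ (1-2*σ) := by
    have step1 : (∑ k ∈ Finset.range (2*n+1), G k)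
        ≤ (n:ℝ) ^ (-σ) * ∑ k ∈ Finset.range (2*n+1), |(k:ℝ) - n| ^ (-σ) := by
      rw [Finset.mul_sum]
      exact Finset.sum_le_sum fun k _ => hG1 k
    refine step1.trans ?_
    have e1 : (n:ℝ) ^ (-σ) * (n:ℝ) ^ (1-σ) = (n:ℝ) ^ (1-2*σ) := by
      rw [← Real.rpow_add hn0]; ring_nf
    calc (n:ℝ) ^ (-σ) * ∑ k ∈ Finset.range (2*n+1), |(k:ℝ) - n| ^ (-σ)
        ≤ (n:ℝ) ^ (-σ) * (2 * ((n:ℝ) ^ (1-σ) / (1-σ))) :=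
          mul_le_mul_of_nonneg_left hT (Real.rpow_nonneg hn0.le _)
      _ = 2 / (1-σ) * ((n:ℝ) ^ (-σ) * (n:ℝ) ^ (1-σ)) := by ring
      _ = 2 / (1-σ) * (n:ℝ) ^ (1-2*σ) := by rw [e1]
  -- tail part
  have htail : (∑' k : ℕ, G (k + (2*n+1))) ≤ 2 / (2*σ-1) * (n:ℝ) ^ (1-2*σ) := by
    have hsum1 : Summable (fun k : ℕ => G (k + (2*n+1))) := (summable_nat_add_iff _).2 hGsum
    have step : (∑' k : ℕ, G (k + (2*n+1)))
        ≤ ∑' k : ℕ, 2 * ((k + (2*n+1) : ℕ):ℝ) ^ (-(2*σ)) :=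
      Summable.tsum_le_tsum (fun k => hG2 _ (by omega)) hsum1 hshift
    refine step.trans ?_
    rw [tsum_mul_left]
    have hfb : (∑' k : ℕ, ((k + (2*n+1) : ℕ):ℝ) ^ (-(2*σ)))
        ≤ (((2*n+1:ℕ):ℝ) - 1) ^ (1-2*σ) / (2*σ-1) := by
      have h := factB h2σ (2*n+1) (by omega)
      refine le_trans (le_of_eq (tsum_congr fun k => ?_)) h
      congr 1
      push_cast; ring
    have e2 : (((2*n+1:ℕ):ℝ) - 1) = 2*(n:ℝ) := by push_cast; ring
    rw [e2] at hfb
    have e3 : (2*(n:ℝ)) ^ (1-2*σ) ≤ (n:ℝ) ^ (1-2*σ) :=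
      Real.rpow_le_rpow_of_nonpos hn0 (by linarith) (by linarith)
    calc 2 * (∑' k : ℕ, ((k + (2*n+1) : ℕ):ℝ) ^ (-(2*σ)))
        ≤ 2 * ((2*(n:ℝ)) ^ (1-2*σ) / (2*σ-1)) := by linarith
      _ ≤ 2 * ((n:ℝ) ^ (1-2*σ) / (2*σ-1)) := by
          have : (2*(n:ℝ)) ^ (1-2*σ) / (2*σ-1) ≤ (n:ℝ) ^ (1-2*σ) / (2*σ-1) := by gcongr
          linarith
      _ = 2 / (2*σ-1) * (n:ℝ) ^ (1-2*σ) := by ring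
  -- assemble
  have hX : (0:ℝ) ≤ (n:ℝ) ^ (1-2*σ) := Real.rpow_nonneg hn0.le _
  have efin : (4 / (1 - σ) + 4 / (2 * σ - 1)) / (n:ℝ) ^ (2*σ-1)
      = (4 / (1 - σ) + 4 / (2 * σ - 1)) * (n:ℝ) ^ (1-2*σ) := by
    rw [div_eq_mul_inv, ← Real.rpow_neg hn0.le, show -(2*σ-1) = 1-2*σ from by ring]
  rw [ht1, ht2, efin]
  have hGle : (∑' k : ℕ, G k) ≤ (2 / (1-σ) + 2 / (2*σ-1)) * (n:ℝ) ^ (1-2*σ) := by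
    rw [hsplit]
    have : (2 / (1-σ) + 2 / (2*σ-1)) * (n:ℝ) ^ (1-2*σ)
        = 2 / (1-σ) * (n:ℝ) ^ (1-2*σ) + 2 / (2*σ-1) * (n:ℝ) ^ (1-2*σ) := by ring
    linarith
  have efin2 : (4 / (1 - σ) + 4 / (2 * σ - 1)) * (n:ℝ) ^ (1-2*σ)
      = 2 * ((2 / (1-σ) + 2 / (2*σ-1)) * (n:ℝ) ^ (1-2*σ)) := by ring
  rw [efin2]
  linarith
end

section
/- For every real number σ > 1 there exists a constant C_σ > 0 such that for every integer n ≥ 1 one has ∑_{m ∈ ℤ, |m| ≠ n} 1/|m² − n²|^σ ≤ C_σ / n^σ. -/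
/-! Writing `|m² - n²| = a b` with `a = |m - n|`, `b = |m + n|`, one of the two factors is at
least `n` (their sum is at least `2n`), so `|m² - n²|^(-σ) ≤ n^(-σ) (a^(-σ) + b^(-σ))`.
Summing over `m`, each of the two shifted series is `∑_{k ∈ ℤ} |k|^(-σ)`, which converges
for `σ > 1`; hence `C_σ = 2 ∑_{k ∈ ℤ} |k|^(-σ)` works. -/

lemma mul_rpow_neg_le_of_le_max {a b c σ : ℝ} (ha : 0 < a) (hb : 0 < b) (hc : 0 < c)
    (hσ : 0 ≤ σ) (hmax : c ≤ max a b) :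
    (a * b) ^ (-σ) ≤ c ^ (-σ) * (a ^ (-σ) + b ^ (-σ)) := by
  have hσ' : -σ ≤ 0 := neg_nonpos.mpr hσ
  rw [Real.mul_rpow ha.le hb.le]
  rcases le_max_iff.mp hmax with hca | hcb
  · calc a ^ (-σ) * b ^ (-σ) ≤ c ^ (-σ) * b ^ (-σ) :=
          mul_le_mul_of_nonneg_right (Real.rpow_le_rpow_of_nonpos hc hca hσ') (by positivity)
      _ ≤ c ^ (-σ) * (a ^ (-σ) + b ^ (-σ)) := by gcongr; linarith [Real.rpow_nonneg ha.le (-σ)]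
  · calc a ^ (-σ) * b ^ (-σ) ≤ a ^ (-σ) * c ^ (-σ) :=
          mul_le_mul_of_nonneg_left (Real.rpow_le_rpow_of_nonpos hc hcb hσ') (by positivity)
      _ ≤ c ^ (-σ) * (a ^ (-σ) + b ^ (-σ)) := by
          rw [mul_comm]; gcongr; linarith [Real.rpow_nonneg hb.le (-σ)]

lemma abs_sq_sub_sq_rpow_neg_le {m n σ : ℝ} (hn : 0 < n) (hσ : 0 ≤ σ) (hmn : m ≠ n)
    (hmn' : m ≠ -n) :
    |m ^ 2 - n ^ 2| ^ (-σ) ≤ n ^ (-σ) * (|m - n| ^ (-σ) + |m + n| ^ (-σ)) := by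
  have hmax : n ≤ max |m - n| |m + n| := by
    rcases le_total 0 m with hm | hm
    · exact le_max_of_le_right (by rw [abs_of_pos (by linarith)]; linarith)
    · exact le_max_of_le_left (by rw [abs_of_neg (by linarith)]; linarith)
  rw [show m ^ 2 - n ^ 2 = (m - n) * (m + n) by ring, abs_mul]
  exact mul_rpow_neg_le_of_le_max (abs_pos.mpr (sub_ne_zero.mpr hmn))
    (abs_pos.mpr fun h => hmn' (eq_neg_of_add_eq_zero_left h)) hn hσ hmax

lemma summable_abs_int_add_rpow_neg {σ : ℝ} (hσ : 1 < σ) (c : ℤ) :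
    Summable fun m : ℤ => |(m : ℝ) + c| ^ (-σ) := by
  have := (Equiv.addRight c).summable_iff.mpr (Real.summable_abs_int_rpow hσ)
  simpa [Function.comp_def] using this

lemma tsum_abs_int_add_rpow_neg (σ : ℝ) (c : ℤ) :
    ∑' m : ℤ, |(m : ℝ) + c| ^ (-σ) = ∑' k : ℤ, |(k : ℝ)| ^ (-σ) := by
  simpa using (Equiv.addRight c).tsum_eq fun k : ℤ => |(k : ℝ)| ^ (-σ)

/-- For every real `σ > 1` there is a constant `C_σ > 0` such that for every integer `n ≥ 1`,
`∑_{m ∈ ℤ, |m| ≠ n} 1/|m² − n²|^σ ≤ C_σ / n^σ`. -/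
theorem stmt_2 (σ : ℝ) (hσ : 1 < σ) :
    ∃ C : ℝ, 0 < C ∧ ∀ n : ℕ, 1 ≤ n →
      Summable (fun m : {m : ℤ // m.natAbs ≠ n} =>
        1 / |((m : ℤ) : ℝ) ^ 2 - (n : ℝ) ^ 2| ^ σ) ∧
      (∑' m : {m : ℤ // m.natAbs ≠ n}, 1 / |((m : ℤ) : ℝ) ^ 2 - (n : ℝ) ^ 2| ^ σ)
        ≤ C / (n : ℝ) ^ σ := by
  set S := ∑' k : ℤ, |(k : ℝ)| ^ (-σ)
  have hS : 0 < S := (Real.summable_abs_int_rpow hσ).tsum_pos (fun _ => by positivity) 1 (by simp)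
  refine ⟨2 * S, by positivity, fun n hn => ?_⟩
  have hn' : (0 : ℝ) < n := by exact_mod_cast hn
  set G : ℤ → ℝ := fun m => (n : ℝ) ^ (-σ) *
    (|(m : ℝ) + ((-n : ℤ) : ℝ)| ^ (-σ) + |(m : ℝ) + ((n : ℤ) : ℝ)| ^ (-σ))
  have hG : Summable G := ((summable_abs_int_add_rpow_neg hσ _).add
    (summable_abs_int_add_rpow_neg hσ _)).mul_left _
  have hG_nonneg : ∀ m, 0 ≤ G m := fun _ => by positivity
  have hbound : ∀ m : {m : ℤ // m.natAbs ≠ n},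
      1 / |((m : ℤ) : ℝ) ^ 2 - (n : ℝ) ^ 2| ^ σ ≤ G m := by
    rintro ⟨m, hm⟩
    have hmn : (m : ℝ) ≠ n := by exact_mod_cast fun h : m = n => hm (by simp [h])
    have hmn' : (m : ℝ) ≠ -n := by exact_mod_cast fun h : m = -n => hm (by simp [h])
    rw [one_div, ← Real.rpow_neg (abs_nonneg _)]
    refine (abs_sq_sub_sq_rpow_neg_le hn' (by linarith : 0 ≤ σ) hmn hmn').trans_eq ?_
    simp [G, sub_eq_add_neg]
  have hsum := (hG.subtype _).of_nonneg_of_le (fun _ => by positivity) hbound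
  refine ⟨hsum, ?_⟩
  calc _ ≤ ∑' m : {m : ℤ // m.natAbs ≠ n}, G m := hsum.tsum_le_tsum hbound (hG.subtype _)
    _ ≤ ∑' m, G m := hG.tsum_subtype_le G _ hG_nonneg
    _ = 2 * S / (n : ℝ) ^ σ := by
      rw [tsum_mul_left, (summable_abs_int_add_rpow_neg hσ _).tsum_add
        (summable_abs_int_add_rpow_neg hσ _), tsum_abs_int_add_rpow_neg,
        tsum_abs_int_add_rpow_neg, Real.rpow_neg hn'.le]
      ring
end

section
/- For every real number a with 0 ≤ a < 1 there exists a constant C_a > 0 such that for every integer n ≥ 1 one has ∑_{k ∈ ℤ, |k| ≠ n} 1/(|n + k|^{1−a} · |n − k|) ≤ C_a / n^{(1−a)/2}. -/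
/-- Key pointwise inequality. -/
lemma stmt_3_key (a : ℝ) (ha₀ : 0 ≤ a) (ha₁ : a < 1) (n : ℝ) (hn : 1 ≤ n)
    (x y : ℝ) (hx : 1 ≤ x) (hy : 1 ≤ y) (hxy : n ≤ max x y) :
    1 / (x ^ (1 - a) * y) ≤
      (1 / n ^ ((1 - a) / 2)) * (1 / x ^ ((3 - a) / 2) + 1 / y ^ ((3 - a) / 2)) := by
  have hx0 : (0:ℝ) < x := by linarith
  have hy0 : (0:ℝ) < y := by linarith
  have hn0 : (0:ℝ) < n := by linarith
  have hs : (0:ℝ) ≤ (1 - a) / 2 := by linarith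
  have ht : (0:ℝ) ≤ (1 + a) / 2 := by linarith
  have hxp : (0:ℝ) < x ^ ((3 - a) / 2) := Real.rpow_pos_of_pos hx0 _
  have hyp : (0:ℝ) < y ^ ((3 - a) / 2) := Real.rpow_pos_of_pos hy0 _
  have hns : (0:ℝ) < n ^ ((1 - a) / 2) := Real.rpow_pos_of_pos hn0 _
  rcases le_total x y with h | h
  · -- max = y, so n ≤ y; bound by term 1/x^p
    have hny : n ≤ y := by rw [max_eq_right h] at hxy; exact hxy
    -- n^s * x^((1+a)/2) ≤ y^s * y^((1+a)/2) = y
    have h1 : n ^ ((1 - a) / 2) ≤ y ^ ((1 - a) / 2) :=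
      Real.rpow_le_rpow hn0.le hny hs
    have h2 : x ^ ((1 + a) / 2) ≤ y ^ ((1 + a) / 2) :=
      Real.rpow_le_rpow hx0.le h ht
    have h3 : n ^ ((1 - a) / 2) * x ^ ((1 + a) / 2) ≤ y := by
      calc n ^ ((1 - a) / 2) * x ^ ((1 + a) / 2)
          ≤ y ^ ((1 - a) / 2) * y ^ ((1 + a) / 2) := by
            apply mul_le_mul h1 h2 (by positivity) (by positivity)
        _ = y ^ ((1 - a) / 2 + (1 + a) / 2) := (Real.rpow_add hy0 _ _).symm
        _ = y := by rw [show (1 - a) / 2 + (1 + a) / 2 = 1 by ring, Real.rpow_one]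
    have hsplit : x ^ ((3 - a) / 2) = x ^ ((1 + a) / 2) * x ^ (1 - a) := by
      rw [← Real.rpow_add hx0, show (1 + a) / 2 + (1 - a) = (3 - a) / 2 by ring]
    have h4 : n ^ ((1 - a) / 2) * x ^ ((3 - a) / 2) ≤ x ^ (1 - a) * y := by
      rw [hsplit, ← mul_assoc]
      calc n ^ ((1 - a) / 2) * x ^ ((1 + a) / 2) * x ^ (1 - a)
          ≤ y * x ^ (1 - a) := by
            apply mul_le_mul_of_nonneg_right h3 (by positivity)
        _ = x ^ (1 - a) * y := by ring
    have h5 : 1 / (x ^ (1 - a) * y) ≤ 1 / (n ^ ((1 - a) / 2) * x ^ ((3 - a) / 2)) :=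
      one_div_le_one_div_of_le (by positivity) h4
    calc 1 / (x ^ (1 - a) * y) ≤ 1 / (n ^ ((1 - a) / 2) * x ^ ((3 - a) / 2)) := h5
      _ = (1 / n ^ ((1 - a) / 2)) * (1 / x ^ ((3 - a) / 2)) := by
          rw [one_div_mul_eq_div, div_div]; ring
      _ ≤ (1 / n ^ ((1 - a) / 2)) * (1 / x ^ ((3 - a) / 2) + 1 / y ^ ((3 - a) / 2)) := by
          apply mul_le_mul_of_nonneg_left _ (by positivity)
          have : (0:ℝ) ≤ 1 / y ^ ((3 - a) / 2) := by positivity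
          linarith
  · -- max = x, so n ≤ x; bound by term 1/y^p
    have hnx : n ≤ x := by rw [max_eq_left h] at hxy; exact hxy
    have h1 : n ^ ((1 - a) / 2) ≤ x ^ ((1 - a) / 2) :=
      Real.rpow_le_rpow hn0.le hnx hs
    have h2 : y ^ ((1 - a) / 2) ≤ x ^ ((1 - a) / 2) :=
      Real.rpow_le_rpow hy0.le h hs
    have h3 : n ^ ((1 - a) / 2) * y ^ ((1 - a) / 2) ≤ x ^ (1 - a) := by
      calc n ^ ((1 - a) / 2) * y ^ ((1 - a) / 2)
          ≤ x ^ ((1 - a) / 2) * x ^ ((1 - a) / 2) := by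
            apply mul_le_mul h1 h2 (by positivity) (by positivity)
        _ = x ^ ((1 - a) / 2 + (1 - a) / 2) := (Real.rpow_add hx0 _ _).symm
        _ = x ^ (1 - a) := by rw [show (1 - a) / 2 + (1 - a) / 2 = 1 - a by ring]
    have hsplit : y ^ ((3 - a) / 2) = y ^ ((1 - a) / 2) * y := by
      rw [show (3 - a) / 2 = (1 - a) / 2 + 1 by ring, Real.rpow_add hy0, Real.rpow_one]
    have h4 : n ^ ((1 - a) / 2) * y ^ ((3 - a) / 2) ≤ x ^ (1 - a) * y := by
      rw [hsplit, ← mul_assoc]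
      apply mul_le_mul_of_nonneg_right h3 (by positivity)
    have h5 : 1 / (x ^ (1 - a) * y) ≤ 1 / (n ^ ((1 - a) / 2) * y ^ ((3 - a) / 2)) :=
      one_div_le_one_div_of_le (by positivity) h4
    calc 1 / (x ^ (1 - a) * y) ≤ 1 / (n ^ ((1 - a) / 2) * y ^ ((3 - a) / 2)) := h5
      _ = (1 / n ^ ((1 - a) / 2)) * (1 / y ^ ((3 - a) / 2)) := by
          rw [one_div_mul_eq_div, div_div]; ring
      _ ≤ (1 / n ^ ((1 - a) / 2)) * (1 / x ^ ((3 - a) / 2) + 1 / y ^ ((3 - a) / 2)) := by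
          apply mul_le_mul_of_nonneg_left _ (by positivity)
          have : (0:ℝ) ≤ 1 / x ^ ((3 - a) / 2) := by positivity
          linarith

/-- For every real `a` with `0 ≤ a < 1` there is a constant `C_a > 0` such that for every
integer `n ≥ 1`, `∑_{k ∈ ℤ, |k| ≠ n} 1/(|n+k|^(1−a) · |n−k|) ≤ C_a / n^((1−a)/2)`. -/
theorem stmt_3 (a : ℝ) (ha₀ : 0 ≤ a) (ha₁ : a < 1) :
    ∃ C : ℝ, 0 < C ∧ ∀ n : ℕ, 1 ≤ n →
      Summable (fun k : {k : ℤ // k.natAbs ≠ n} =>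
        1 / (|(n : ℝ) + ((k : ℤ) : ℝ)| ^ (1 - a) * |(n : ℝ) - ((k : ℤ) : ℝ)|)) ∧
      (∑' k : {k : ℤ // k.natAbs ≠ n},
          1 / (|(n : ℝ) + ((k : ℤ) : ℝ)| ^ (1 - a) * |(n : ℝ) - ((k : ℤ) : ℝ)|))
        ≤ C / (n : ℝ) ^ ((1 - a) / 2) := by
  set p : ℝ := (3 - a) / 2 with hp_def
  have hp : 1 < p := by rw [hp_def]; linarith
  -- h : ℤ → ℝ, the comparison function
  set h : ℤ → ℝ := fun j => 1 / |(j : ℝ)| ^ p with hh_def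
  have hh_sum : Summable h := by
    have := Real.summable_abs_int_rpow hp
    refine this.congr fun j => ?_
    rw [hh_def]
    simp only [Real.rpow_neg (abs_nonneg _), one_div]
  have hh_nonneg : ∀ j, 0 ≤ h j := fun j => by rw [hh_def]; positivity
  set T : ℝ := ∑' j : ℤ, h j with hT_def
  have hT_nonneg : 0 ≤ T := tsum_nonneg hh_nonneg
  refine ⟨2 * T + 1, by positivity, fun n hn => ?_⟩
  have hn0 : (0:ℝ) < (n:ℝ) := by exact_mod_cast hn
  have hn1 : (1:ℝ) ≤ (n:ℝ) := by exact_mod_cast hn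
  have hns : (0:ℝ) < (n:ℝ) ^ ((1 - a) / 2) := Real.rpow_pos_of_pos hn0 _
  -- the comparison function over ℤ
  set g : ℤ → ℝ := fun k =>
    (1 / (n:ℝ) ^ ((1 - a) / 2)) * (h ((n:ℤ) + k) + h ((n:ℤ) - k)) with hg_def
  have hg1 : Summable fun k : ℤ => h ((n:ℤ) + k) :=
    (Equiv.addLeft (n:ℤ)).summable_iff.mpr hh_sum |>.congr fun k => rfl
  have hg2 : Summable fun k : ℤ => h ((n:ℤ) - k) :=
    (Equiv.subLeft (n:ℤ)).summable_iff.mpr hh_sum |>.congr fun k => rfl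
  have hg_sum : Summable g := ((hg1.add hg2).mul_left _)
  have hg_nonneg : ∀ k, 0 ≤ g k := fun k => by
    rw [hg_def]
    have := hh_nonneg ((n:ℤ) + k)
    have := hh_nonneg ((n:ℤ) - k)
    positivity
  -- pointwise bound on the subtype
  have hbound : ∀ k : {k : ℤ // k.natAbs ≠ n},
      1 / (|(n : ℝ) + ((k : ℤ) : ℝ)| ^ (1 - a) * |(n : ℝ) - ((k : ℤ) : ℝ)|) ≤ g (k : ℤ) := by
    rintro ⟨k, hk⟩
    have hk1 : (n:ℤ) + k ≠ 0 := by
      intro hc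
      apply hk
      have : k = -(n:ℤ) := by omega
      simp [this]
    have hk2 : (n:ℤ) - k ≠ 0 := by
      intro hc
      apply hk
      have : k = (n:ℤ) := by omega
      simp [this]
    have hx1 : (1:ℝ) ≤ |(n : ℝ) + (k : ℝ)| := by
      have : (1:ℤ) ≤ |(n:ℤ) + k| := Int.one_le_abs hk1
      calc (1:ℝ) ≤ (|(n:ℤ) + k| : ℤ) := by exact_mod_cast this
        _ = |(n : ℝ) + (k : ℝ)| := by push_cast [Int.cast_abs]; ring_nf
    have hy1 : (1:ℝ) ≤ |(n : ℝ) - (k : ℝ)| := by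
      have : (1:ℤ) ≤ |(n:ℤ) - k| := Int.one_le_abs hk2
      calc (1:ℝ) ≤ (|(n:ℤ) - k| : ℤ) := by exact_mod_cast this
        _ = |(n : ℝ) - (k : ℝ)| := by push_cast [Int.cast_abs]; ring_nf
    have hmax : (n:ℝ) ≤ max |(n : ℝ) + (k : ℝ)| |(n : ℝ) - (k : ℝ)| := by
      by_contra hcon
      push_neg at hcon
      rw [max_lt_iff] at hcon
      obtain ⟨c1, c2⟩ := hcon
      have := abs_lt.mp c1
      have := abs_lt.mp c2
      linarith [this.1, this.2]
    have key := stmt_3_key a ha₀ ha₁ (n:ℝ) hn1 _ _ hx1 hy1 hmax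
    refine key.trans ?_
    rw [hg_def, hh_def]
    simp only
    have e1 : |(((n:ℤ) + k : ℤ) : ℝ)| = |(n : ℝ) + (k : ℝ)| := by push_cast; ring_nf
    have e2 : |(((n:ℤ) - k : ℤ) : ℝ)| = |(n : ℝ) - (k : ℝ)| := by push_cast; ring_nf
    rw [e1, e2, hp_def]
  have hf_nonneg : ∀ k : {k : ℤ // k.natAbs ≠ n},
      0 ≤ 1 / (|(n : ℝ) + ((k : ℤ) : ℝ)| ^ (1 - a) * |(n : ℝ) - ((k : ℤ) : ℝ)|) := by
    intro k; positivity
  have hf_sum : Summable (fun k : {k : ℤ // k.natAbs ≠ n} =>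
      1 / (|(n : ℝ) + ((k : ℤ) : ℝ)| ^ (1 - a) * |(n : ℝ) - ((k : ℤ) : ℝ)|)) :=
    Summable.of_nonneg_of_le hf_nonneg hbound (hg_sum.subtype _)
  refine ⟨hf_sum, ?_⟩
  -- compute tsum of g over ℤ
  have hT1 : (∑' k : ℤ, h ((n:ℤ) + k)) = T := by
    rw [hT_def]
    exact (Equiv.addLeft (n:ℤ)).tsum_eq h
  have hT2 : (∑' k : ℤ, h ((n:ℤ) - k)) = T := by
    rw [hT_def]
    exact (Equiv.subLeft (n:ℤ)).tsum_eq h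
  have hg_tsum : (∑' k : ℤ, g k) = (1 / (n:ℝ) ^ ((1 - a) / 2)) * (2 * T) := by
    rw [hg_def]
    rw [tsum_mul_left, Summable.tsum_add hg1 hg2, hT1, hT2]
    ring
  calc (∑' k : {k : ℤ // k.natAbs ≠ n},
          1 / (|(n : ℝ) + ((k : ℤ) : ℝ)| ^ (1 - a) * |(n : ℝ) - ((k : ℤ) : ℝ)|))
      ≤ ∑' k : {k : ℤ // k.natAbs ≠ n}, g (k : ℤ) :=
        Summable.tsum_le_tsum hbound hf_sum (hg_sum.subtype _)
    _ ≤ ∑' k : ℤ, g k := Summable.tsum_subtype_le g _ hg_nonneg hg_sum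
    _ = (1 / (n:ℝ) ^ ((1 - a) / 2)) * (2 * T) := hg_tsum
    _ ≤ (2 * T + 1) / (n : ℝ) ^ ((1 - a) / 2) := by
        rw [one_div_mul_eq_div, div_le_div_iff₀ hns hns]
        have : (0:ℝ) < (n:ℝ) ^ ((1 - a) / 2) := hns
        nlinarith
end

section
/- Let −1 ≤ t < −1/2. There exists a constant C_t > 0 such that for all complex sequences a ∈ ℓ^{t,2} and b ∈ ℓ^{1,2}, the convolution a*b, defined by (a*b)_n = ∑_{m∈ℤ} a_{n−m} b_m, is well defined (each series converges absolutely) and satisfies ‖a*b‖_{t,2} ≤ C_t ‖a‖_{t,2} ‖b‖_{1,2}. -/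
/-!
Write `⟨k⟩ = 1 + |k|`, `f = ⟨·⟩^t |a|` and `g = ⟨·⟩ |b|`, so that
`⟨n⟩^t |a (n - m) b m| = K n m * f (n - m) * g m` with `K n m = ⟨n⟩^t ⟨n - m⟩^(-t) ⟨m⟩⁻¹`.
Since `⟨n - m⟩ ≤ ⟨n⟩ + ⟨m⟩` and `x ↦ x^(-t)` is subadditive for `0 ≤ -t ≤ 1`, we get
`K n m ≤ ⟨n⟩^t + ⟨m⟩⁻¹`. The first term contributes `⟨n⟩^t (f ⋆ g) n ≤ ⟨n⟩^t ‖f‖₂ ‖g‖₂`, which is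
square summable because `2t < -1`. The second contributes `f ⋆ (⟨·⟩⁻¹ g)`, whose `ℓ²` norm is at
most `‖f‖₂ ‖⟨·⟩⁻¹ g‖₁ ≤ ‖f‖₂ ‖⟨·⟩⁻¹‖₂ ‖g‖₂` by Young's and the Cauchy–Schwarz inequality.
Minkowski's inequality adds the two bounds.
-/

open Real

section CauchySchwarz

variable {ι : Type*} {f g : ι → ℝ}

theorem summable_mul_and_tsum_mul_le_sqrt_mul_sqrt (hf0 : ∀ i, 0 ≤ f i) (hg0 : ∀ i, 0 ≤ g i)
    (hf : Summable fun i => f i ^ 2) (hg : Summable fun i => g i ^ 2) :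
    (Summable fun i => f i * g i) ∧
      ∑' i, f i * g i ≤ √(∑' i, f i ^ 2) * √(∑' i, g i ^ 2) := by
  simp only [← rpow_two] at hf hg ⊢
  simpa only [sqrt_eq_rpow] using
    summable_and_inner_le_Lp_mul_Lq_tsum_of_nonneg .two_two hf0 hg0 hf hg

theorem summable_mul_and_sq_tsum_mul_le {w : ι → ℝ} (hf0 : ∀ i, 0 ≤ f i) (hw0 : ∀ i, 0 ≤ w i)
    (hw : Summable w) (hfw : Summable fun i => f i ^ 2 * w i) :
    (Summable fun i => f i * w i) ∧ (∑' i, f i * w i) ^ 2 ≤ (∑' i, w i) * ∑' i, f i ^ 2 * w i := by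
  have hsq : ∀ i, √(w i) ^ 2 = w i := fun i => sq_sqrt (hw0 i)
  have hsq' : ∀ i, (f i * √(w i)) ^ 2 = f i ^ 2 * w i := fun i => by rw [mul_pow, hsq]
  have hfac : ∀ i, f i * √(w i) * √(w i) = f i * w i := fun i => by
    rw [mul_assoc, mul_self_sqrt (hw0 i)]
  obtain ⟨hsum, hle⟩ := summable_mul_and_tsum_mul_le_sqrt_mul_sqrt (f := fun i => f i * √(w i))
    (fun i => mul_nonneg (hf0 i) (sqrt_nonneg _)) (fun i => sqrt_nonneg (w i))
    (by simpa only [hsq'] using hfw) (by simpa only [hsq] using hw)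
  simp only [hfac, hsq, hsq'] at hsum hle
  refine ⟨hsum, ?_⟩
  calc (∑' i, f i * w i) ^ 2 ≤ (√(∑' i, f i ^ 2 * w i) * √(∑' i, w i)) ^ 2 :=
        pow_le_pow_left₀ (tsum_nonneg fun i => mul_nonneg (hf0 i) (hw0 i)) hle 2
    _ = _ := by
        rw [mul_pow, sq_sqrt (tsum_nonneg hw0),
          sq_sqrt (tsum_nonneg fun i => mul_nonneg (sq_nonneg _) (hw0 i)), mul_comm]

theorem summable_sq_and_sqrt_tsum_sq_le_of_le_add {p : ι → ℝ} (hp0 : ∀ i, 0 ≤ p i)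
    (hf0 : ∀ i, 0 ≤ f i) (hg0 : ∀ i, 0 ≤ g i) (hpfg : ∀ i, p i ≤ f i + g i)
    (hf : Summable fun i => f i ^ 2) (hg : Summable fun i => g i ^ 2) :
    (Summable fun i => p i ^ 2) ∧ √(∑' i, p i ^ 2) ≤ √(∑' i, f i ^ 2) + √(∑' i, g i ^ 2) := by
  obtain ⟨hsum, hle⟩ := Lp_add_le_tsum_of_nonneg one_le_two hf0 hg0
    (by simpa only [rpow_two] using hf) (by simpa only [rpow_two] using hg)
  simp only [rpow_two, ← sqrt_eq_rpow] at hsum hle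
  have hsq : ∀ i, p i ^ 2 ≤ (f i + g i) ^ 2 := fun i =>
    pow_le_pow_left₀ (hp0 i) (hpfg i) 2
  have hpsum : Summable fun i => p i ^ 2 := hsum.of_nonneg_of_le (fun i => sq_nonneg _) hsq
  exact ⟨hpsum, (sqrt_le_sqrt (hpsum.tsum_le_tsum hsq hsum)).trans hle⟩

end CauchySchwarz

section Convolution

variable {G : Type*} [AddGroup G] {f g : G → ℝ}

theorem summable_conv_and_tsum_conv_le (hf0 : ∀ k, 0 ≤ f k) (hg0 : ∀ k, 0 ≤ g k)
    (hf : Summable fun k => f k ^ 2) (hg : Summable fun k => g k ^ 2) (n : G) :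
    (Summable fun m => f (n - m) * g m) ∧
      ∑' m, f (n - m) * g m ≤ √(∑' k, f k ^ 2) * √(∑' k, g k ^ 2) := by
  have hshift : Summable fun m => f (n - m) ^ 2 :=
    (Equiv.subLeft n).summable_iff.2 hf
  rw [← (Equiv.subLeft n).tsum_eq fun k => f k ^ 2]
  exact summable_mul_and_tsum_mul_le_sqrt_mul_sqrt (fun m => hf0 _) hg0 hshift hg

theorem summable_sq_sub_mul (hg0 : ∀ k, 0 ≤ g k) (hf : Summable fun k => f k ^ 2)
    (hg : Summable g) (n : G) : Summable fun m => f (n - m) ^ 2 * g m :=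
  (hg.mul_left (∑' k, f k ^ 2)).of_nonneg_of_le (fun m => mul_nonneg (sq_nonneg _) (hg0 m))
    fun m => mul_le_mul_of_nonneg_right (hf.le_tsum (n - m) fun k _ => sq_nonneg (f k)) (hg0 m)

theorem sum_tsum_sq_sub_mul_le (hg0 : ∀ k, 0 ≤ g k) (hf : Summable fun k => f k ^ 2)
    (hg : Summable g) (s : Finset G) :
    ∑ n ∈ s, ∑' m, f (n - m) ^ 2 * g m ≤ (∑' k, f k ^ 2) * ∑' m, g m := by
  have hrow := summable_sq_sub_mul hg0 hf hg
  rw [← Summable.tsum_finsetSum fun n _ => hrow n, ← tsum_mul_left]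
  refine Summable.tsum_le_tsum (fun m => ?_) (summable_sum fun n _ => hrow n) (hg.mul_left _)
  rw [← Finset.sum_mul]
  refine mul_le_mul_of_nonneg_right ?_ (hg0 m)
  rw [← (Equiv.subRight m).tsum_eq fun k => f k ^ 2]
  exact ((Equiv.subRight m).summable_iff.2 hf).sum_le_tsum s fun k _ => sq_nonneg _

theorem summable_sq_conv_and_sqrt_tsum_sq_conv_le (hf0 : ∀ k, 0 ≤ f k) (hg0 : ∀ k, 0 ≤ g k)
    (hf : Summable fun k => f k ^ 2) (hg : Summable g) :
    (∀ n, Summable fun m => f (n - m) * g m) ∧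
      (Summable fun n => (∑' m, f (n - m) * g m) ^ 2) ∧
      √(∑' n, (∑' m, f (n - m) * g m) ^ 2) ≤ √(∑' k, f k ^ 2) * ∑' m, g m := by
  set U : G → ℝ := fun n => ∑' m, f (n - m) ^ 2 * g m
  have hU0 : 0 ≤ U := fun n => tsum_nonneg fun m => mul_nonneg (sq_nonneg _) (hg0 m)
  have hU : Summable U := summable_of_sum_le hU0 (sum_tsum_sq_sub_mul_le hg0 hf hg)
  have hpt := fun n => summable_mul_and_sq_tsum_mul_le (fun m => hf0 (n - m)) hg0 hg
    (summable_sq_sub_mul hg0 hf hg n)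
  have hsq : Summable fun n => (∑' m, f (n - m) * g m) ^ 2 :=
    (hU.mul_left _).of_nonneg_of_le (fun n => sq_nonneg _) fun n => (hpt n).2
  refine ⟨fun n => (hpt n).1, hsq, ?_⟩
  have hH : 0 ≤ ∑' m, g m := tsum_nonneg hg0
  calc √(∑' n, (∑' m, f (n - m) * g m) ^ 2) ≤ √((∑' m, g m) * ((∑' k, f k ^ 2) * ∑' m, g m)) := by
        refine sqrt_le_sqrt ((hsq.tsum_le_tsum (fun n => (hpt n).2) (hU.mul_left _)).trans ?_)
        rw [tsum_mul_left]
        exact mul_le_mul_of_nonneg_left (Real.tsum_le_of_sum_le hU0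
          (sum_tsum_sq_sub_mul_le hg0 hf hg)) hH
    _ = √(∑' k, f k ^ 2) * ∑' m, g m := by
        rw [mul_left_comm, sqrt_mul (tsum_nonneg fun k => sq_nonneg _),
          sqrt_mul_self hH]

end Convolution

theorem rpow_mul_rpow_neg_mul_inv_le {t x y z : ℝ} (ht₁ : -1 ≤ t) (ht₀ : t ≤ 0) (hx : 0 < x)
    (hy : 1 ≤ y) (hz : 0 ≤ z) (hzxy : z ≤ x + y) : x ^ t * z ^ (-t) * y⁻¹ ≤ x ^ t + y⁻¹ := by
  have hy0 : 0 < y := by linarith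
  have hz' : z ^ (-t) ≤ x ^ (-t) + y ^ (-t) :=
    (rpow_le_rpow hz hzxy (by linarith)).trans
      (rpow_add_le_add_rpow hx.le hy0.le (by linarith) (by linarith))
  have hx' : x ^ t * x ^ (-t) = 1 := by rw [← rpow_add hx, add_neg_cancel, rpow_zero]
  have hy' : y ^ (-t) * y⁻¹ ≤ 1 := by
    rw [← rpow_neg_one, ← rpow_add hy0]
    exact rpow_le_one_of_one_le_of_nonpos hy (by linarith)
  calc x ^ t * z ^ (-t) * y⁻¹ ≤ x ^ t * (x ^ (-t) + y ^ (-t)) * y⁻¹ := by gcongr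
    _ = x ^ t * x ^ (-t) * y⁻¹ + x ^ t * (y ^ (-t) * y⁻¹) := by ring
    _ ≤ x ^ t + y⁻¹ := by
        rw [hx', one_mul, add_comm]
        exact add_le_add_left (mul_le_of_le_one_right (rpow_pos_of_pos hx t).le hy') _

theorem summable_one_add_abs_int_rpow {s : ℝ} (hs : s < -1) :
    Summable fun k : ℤ => (1 + |k| : ℝ) ^ s := by
  refine (summable_abs_int_rpow (b := -s) (by linarith)).of_norm_bounded_eventually ?_
  filter_upwards [Filter.eventually_cofinite_ne 0] with k hk
  rw [neg_neg, norm_of_nonneg (by positivity)]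
  push_cast
  exact rpow_le_rpow_of_nonpos (by positivity) (by linarith) (by linarith)

theorem summable_sq_one_add_abs_int_rpow {s : ℝ} (hs : s < -(1 / 2)) :
    Summable fun k : ℤ => ((1 + |k| : ℝ) ^ s) ^ 2 :=
  (summable_one_add_abs_int_rpow (s := s * 2) (by linarith)).congr fun k => by
    rw [← rpow_mul_natCast (by positivity)]
    norm_num

noncomputable def weightedNorm (s : ℝ) (a : ℤ → ℂ) (k : ℤ) : ℝ := (1 + |k| : ℝ) ^ s * ‖a k‖

theorem weightedNorm_nonneg (s : ℝ) (a : ℤ → ℂ) (k : ℤ) : 0 ≤ weightedNorm s a k := by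
  unfold weightedNorm; positivity

theorem norm_eq_rpow_neg_mul_weightedNorm (s : ℝ) (a : ℤ → ℂ) (k : ℤ) :
    ‖a k‖ = (1 + |k| : ℝ) ^ (-s) * weightedNorm s a k := by
  rw [weightedNorm, ← mul_assoc, ← rpow_add (by positivity), neg_add_cancel, rpow_zero, one_mul]

theorem rpow_mul_norm_mul_le {t : ℝ} (ht₁ : -1 ≤ t) (ht₀ : t ≤ 0) (a b : ℤ → ℂ) (n m : ℤ) :
    (1 + |n| : ℝ) ^ t * ‖a (n - m) * b m‖ ≤
      (1 + |n| : ℝ) ^ t * (weightedNorm t a (n - m) * weightedNorm 1 b m) +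
        weightedNorm t a (n - m) * (weightedNorm 1 b m * (1 + |m| : ℝ)⁻¹) := by
  have hkernel := rpow_mul_rpow_neg_mul_inv_le ht₁ ht₀ (x := 1 + |n|) (y := 1 + |m|)
    (z := 1 + |n - m|) (by positivity) (by simp) (by positivity)
    (by push_cast; linarith [abs_sub (n : ℝ) m])
  have hprod := mul_nonneg (weightedNorm_nonneg t a (n - m)) (weightedNorm_nonneg 1 b m)
  calc (1 + |n| : ℝ) ^ t * ‖a (n - m) * b m‖
      = (1 + |n| : ℝ) ^ t * (1 + |n - m| : ℝ) ^ (-t) * (1 + |m| : ℝ)⁻¹ *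
          (weightedNorm t a (n - m) * weightedNorm 1 b m) := by
        rw [norm_mul, norm_eq_rpow_neg_mul_weightedNorm t, norm_eq_rpow_neg_mul_weightedNorm 1,
          rpow_neg_one]
        ring
    _ ≤ ((1 + |n| : ℝ) ^ t + (1 + |m| : ℝ)⁻¹) * (weightedNorm t a (n - m) * weightedNorm 1 b m) :=
        mul_le_mul_of_nonneg_right hkernel hprod
    _ = _ := by ring

theorem summable_norm_conv_and_rpow_mul_norm_tsum_le {t : ℝ} (ht₁ : -1 ≤ t) (ht₀ : t ≤ 0)
    {a b : ℤ → ℂ} (ha : Summable fun k => weightedNorm t a k ^ 2)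
    (hb : Summable fun k => weightedNorm 1 b k ^ 2)
    (hb' : Summable fun m => weightedNorm 1 b m * (1 + |m| : ℝ)⁻¹) (n : ℤ) :
    (Summable fun m => ‖a (n - m) * b m‖) ∧
      (1 + |n| : ℝ) ^ t * ‖∑' m, a (n - m) * b m‖ ≤
        (1 + |n| : ℝ) ^ t * (√(∑' k, weightedNorm t a k ^ 2) * √(∑' k, weightedNorm 1 b k ^ 2)) +
          ∑' m, weightedNorm t a (n - m) * (weightedNorm 1 b m * (1 + |m| : ℝ)⁻¹) := by
  have hwn := weightedNorm_nonneg
  obtain ⟨hab, hab_le⟩ := summable_conv_and_tsum_conv_le (hwn t a) (hwn 1 b) ha hb n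
  have hab' := (summable_sq_conv_and_sqrt_tsum_sq_conv_le (hwn t a)
    (fun m => mul_nonneg (hwn 1 b m) (by positivity)) ha hb').1 n
  have hR := (hab.mul_left ((1 + |n| : ℝ) ^ t)).add hab'
  have hL : Summable fun m => (1 + |n| : ℝ) ^ t * ‖a (n - m) * b m‖ :=
    hR.of_nonneg_of_le (fun m => by positivity) (rpow_mul_norm_mul_le ht₁ ht₀ a b n)
  have hnorm := (summable_mul_left_iff (by positivity)).1 hL
  refine ⟨hnorm, ?_⟩
  calc (1 + |n| : ℝ) ^ t * ‖∑' m, a (n - m) * b m‖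
      ≤ (1 + |n| : ℝ) ^ t * ∑' m, ‖a (n - m) * b m‖ := by
        gcongr; exact norm_tsum_le_tsum_norm hnorm
    _ ≤ ∑' m, ((1 + |n| : ℝ) ^ t * (weightedNorm t a (n - m) * weightedNorm 1 b m) +
          weightedNorm t a (n - m) * (weightedNorm 1 b m * (1 + |m| : ℝ)⁻¹)) := by
        rw [← tsum_mul_left]
        exact hL.tsum_le_tsum (rpow_mul_norm_mul_le ht₁ ht₀ a b n) hR
    _ ≤ _ := by
        rw [(hab.mul_left _).tsum_add hab', tsum_mul_left]
        gcongr

theorem summable_sq_weightedNorm_conv_and_sqrt_tsum_le {t : ℝ} (ht₁ : -1 ≤ t)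
    (ht₂ : t < -(1 / 2)) {a b : ℤ → ℂ} (ha : Summable fun k => weightedNorm t a k ^ 2)
    (hb : Summable fun k => weightedNorm 1 b k ^ 2) :
    (∀ n, Summable fun m => ‖a (n - m) * b m‖) ∧
      (Summable fun n => weightedNorm t (fun n => ∑' m, a (n - m) * b m) n ^ 2) ∧
      √(∑' n, weightedNorm t (fun n => ∑' m, a (n - m) * b m) n ^ 2) ≤
        (√(∑' n : ℤ, ((1 + |n| : ℝ) ^ t) ^ 2) + √(∑' m : ℤ, ((1 + |m| : ℝ)⁻¹) ^ 2)) *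
          √(∑' k, weightedNorm t a k ^ 2) * √(∑' k, weightedNorm 1 b k ^ 2) := by
  have hS₁ := summable_sq_one_add_abs_int_rpow ht₂
  have hS₂ : Summable fun m : ℤ => ((1 + |m| : ℝ)⁻¹) ^ 2 := by
    simpa only [rpow_neg_one] using summable_sq_one_add_abs_int_rpow (s := -1) (by norm_num)
  obtain ⟨hb', hb'_le⟩ := summable_mul_and_tsum_mul_le_sqrt_mul_sqrt (weightedNorm_nonneg 1 b)
    (fun m => by positivity) hb hS₂
  have hh0 (m : ℤ) : 0 ≤ weightedNorm 1 b m * (1 + |m| : ℝ)⁻¹ :=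
    mul_nonneg (weightedNorm_nonneg 1 b m) (by positivity)
  obtain ⟨-, hB, hB_le⟩ :=
    summable_sq_conv_and_sqrt_tsum_sq_conv_le (weightedNorm_nonneg t a) hh0 ha hb'
  have hpt := summable_norm_conv_and_rpow_mul_norm_tsum_le ht₁ (by linarith) ha hb hb'
  set A := √(∑' k, weightedNorm t a k ^ 2) * √(∑' k, weightedNorm 1 b k ^ 2)
  have hA : Summable fun n : ℤ => ((1 + |n| : ℝ) ^ t * A) ^ 2 := by
    simpa only [mul_pow] using hS₁.mul_right (A ^ 2)
  have hA_eq : √(∑' n : ℤ, ((1 + |n| : ℝ) ^ t * A) ^ 2) =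
      √(∑' n : ℤ, ((1 + |n| : ℝ) ^ t) ^ 2) * A := by
    simp only [mul_pow]
    rw [tsum_mul_right, sqrt_mul (tsum_nonneg fun n => by positivity), sqrt_sq (by positivity)]
  obtain ⟨hP, hP_le⟩ := summable_sq_and_sqrt_tsum_sq_le_of_le_add (fun n => by positivity)
    (fun n => by positivity)
    (fun n => tsum_nonneg fun m => mul_nonneg (weightedNorm_nonneg t a _) (hh0 m))
    (fun n => (hpt n).2) hA hB
  refine ⟨fun n => (hpt n).1, hP, hP_le.trans ?_⟩
  calc _ ≤ √(∑' n : ℤ, ((1 + |n| : ℝ) ^ t) ^ 2) * A +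
        √(∑' k, weightedNorm t a k ^ 2) *
          (√(∑' k, weightedNorm 1 b k ^ 2) * √(∑' m : ℤ, ((1 + |m| : ℝ)⁻¹) ^ 2)) :=
        add_le_add hA_eq.le (hB_le.trans (mul_le_mul_of_nonneg_left hb'_le (by positivity)))
    _ = _ := by ring

/-- Convolution estimate: for `−1 ≤ t < −1/2` there is `C_t > 0` such that for all
`a ∈ ℓ^{t,2}` and `b ∈ ℓ^{1,2}`, the convolution `a*b` is well defined (each series converges
absolutely) and `‖a*b‖_{t,2} ≤ C_t ‖a‖_{t,2} ‖b‖_{1,2}`. -/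
theorem stmt_6 (t : ℝ) (ht₁ : -1 ≤ t) (ht₂ : t < -(1 / 2)) :
    ∃ C : ℝ, 0 < C ∧ ∀ a b : ℤ → ℂ,
      Summable (fun k : ℤ => ((1 + |k| : ℝ) ^ t * ‖a k‖) ^ 2) →
      Summable (fun k : ℤ => ((1 + |k| : ℝ) ^ (1 : ℝ) * ‖b k‖) ^ 2) →
      (∀ n : ℤ, Summable fun m : ℤ => ‖a (n - m) * b m‖) ∧
      Summable (fun n : ℤ =>
        ((1 + |n| : ℝ) ^ t * ‖∑' m : ℤ, a (n - m) * b m‖) ^ 2) ∧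
      (∑' n : ℤ, ((1 + |n| : ℝ) ^ t * ‖∑' m : ℤ, a (n - m) * b m‖) ^ 2)
          ^ ((1 : ℝ) / 2)
        ≤ C * (∑' k : ℤ, ((1 + |k| : ℝ) ^ t * ‖a k‖) ^ 2) ^ ((1 : ℝ) / 2)
            * (∑' k : ℤ, ((1 + |k| : ℝ) ^ (1 : ℝ) * ‖b k‖) ^ 2) ^ ((1 : ℝ) / 2) := by
  have hS₁ := summable_sq_one_add_abs_int_rpow ht₂
  refine ⟨√(∑' n : ℤ, ((1 + |n| : ℝ) ^ t) ^ 2) + √(∑' m : ℤ, ((1 + |m| : ℝ)⁻¹) ^ 2),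
    add_pos_of_pos_of_nonneg (sqrt_pos.2 (hS₁.tsum_pos (fun n => sq_nonneg _) 0 (by positivity)))
      (sqrt_nonneg _),
    fun a b ha hb => ?_⟩
  obtain ⟨hconv, hsum, hle⟩ := summable_sq_weightedNorm_conv_and_sqrt_tsum_le ht₁ ht₂ ha hb
  exact ⟨hconv, hsum, by simpa only [sqrt_eq_rpow, weightedNorm] using hle⟩
end

section
/- Let −1/2 ≤ s ≤ 0 and −s − 3/2 < t < 0. There exists a constant C_{s,t} > 0 such that for all complex sequences a ∈ ℓ^{s,∞} and b ∈ ℓ^{t+2,2}, the convolution a*b, defined by (a*b)_n = ∑_{m∈ℤ} a_{n−m} b_m, is well defined (each series converges absolutely) and satisfies ‖a*b‖_{s,∞} ≤ C_{s,t} ‖a‖_{s,∞} ‖b‖_{t+2,2}. -/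
/-!
Write `⟨k⟩ = 1 + |k|`. Since `-s ≥ 0`, Peetre's inequality `⟨n - m⟩^(-s) ≤ ⟨n⟩^(-s) ⟨m⟩^(-s)`
gives `⟨n⟩^s |(a * b)_n| ≤ ‖a‖_{s,∞} ∑_m ⟨m⟩^(-s) |b_m|`. By Cauchy–Schwarz this `ℓ^{-s,1}` norm
of `b` is at most `‖b‖_{t+2,2}` times the `ℓ²` norm of `⟨m⟩^(-s-t-2)`, which is finite exactly
because `2 (s + t + 2) > 1`, i.e. `t > -s - 3/2`.
-/

lemma summable_one_add_abs_rpow {r : ℝ} (hr : r < -1) :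
    Summable fun m : ℤ => (1 + |(m : ℝ)|) ^ r := by
  have h : Summable fun n : ℕ => ((n + 1 : ℕ) : ℝ) ^ r :=
    (summable_nat_add_iff 1).mpr (Real.summable_nat_rpow.mpr hr)
  refine .of_nat_of_neg ?_ ?_ <;> refine h.congr fun n => ?_ <;> simp [add_comm]

lemma one_add_abs_sub_rpow_le {p : ℝ} (hp : 0 ≤ p) (x y : ℝ) :
    (1 + |x - y|) ^ p ≤ (1 + |x|) ^ p * (1 + |y|) ^ p := by
  rw [← Real.mul_rpow (by positivity) (by positivity)]
  refine Real.rpow_le_rpow (by positivity) ?_ hp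
  nlinarith [abs_sub x y, abs_nonneg x, abs_nonneg y]

lemma summable_and_tsum_rpow_mul_norm_le {E : Type*} [SeminormedAddCommGroup E] {r u : ℝ}
    (hru : r - u < -(1 / 2)) {b : ℤ → E}
    (hb : Summable fun m : ℤ => ((1 + |(m : ℝ)|) ^ u * ‖b m‖) ^ 2) :
    Summable (fun m : ℤ => (1 + |(m : ℝ)|) ^ r * ‖b m‖) ∧
      ∑' m : ℤ, (1 + |(m : ℝ)|) ^ r * ‖b m‖ ≤
        (∑' m : ℤ, (1 + |(m : ℝ)|) ^ ((r - u) * 2)) ^ ((1 : ℝ) / 2) *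
          (∑' m : ℤ, ((1 + |(m : ℝ)|) ^ u * ‖b m‖) ^ 2) ^ ((1 : ℝ) / 2) := by
  have hsplit : ∀ m : ℤ, (1 + |(m : ℝ)|) ^ r * ‖b m‖ =
      (1 + |(m : ℝ)|) ^ (r - u) * ((1 + |(m : ℝ)|) ^ u * ‖b m‖) := fun m => by
    rw [← mul_assoc, ← Real.rpow_add (by positivity), sub_add_cancel]
  have hsq : ∀ m : ℤ, ((1 + |(m : ℝ)|) ^ (r - u)) ^ (2 : ℝ) = (1 + |(m : ℝ)|) ^ ((r - u) * 2) :=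
    fun m => (Real.rpow_mul (by positivity) _ _).symm
  simp only [hsplit]
  simpa only [hsq, Real.rpow_two] using
    Real.summable_and_inner_le_Lp_mul_Lq_tsum_of_nonneg .two_two
      (f := fun m : ℤ => (1 + |(m : ℝ)|) ^ (r - u))
      (g := fun m : ℤ => (1 + |(m : ℝ)|) ^ u * ‖b m‖) (fun m => by positivity)
      (fun m => by positivity)
      (by simpa only [hsq] using summable_one_add_abs_rpow (by linarith))
      (by simpa only [Real.rpow_two] using hb)

lemma norm_apply_sub_mul_le {R : Type*} [SeminormedRing R] {s A : ℝ} (hs : s ≤ 0) {a : ℤ → R}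
    (ha : ∀ k : ℤ, (1 + |(k : ℝ)|) ^ s * ‖a k‖ ≤ A) (b : ℤ → R) (n m : ℤ) :
    ‖a (n - m) * b m‖ ≤ A * (1 + |(n : ℝ)|) ^ (-s) * ((1 + |(m : ℝ)|) ^ (-s) * ‖b m‖) := by
  have hA : 0 ≤ A := (mul_nonneg (by positivity) (norm_nonneg _)).trans (ha 0)
  have ha' : ∀ k : ℤ, ‖a k‖ ≤ A * (1 + |(k : ℝ)|) ^ (-s) := fun k => by
    calc ‖a k‖ = (1 + |(k : ℝ)|) ^ (-s) * ((1 + |(k : ℝ)|) ^ s * ‖a k‖) := by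
          rw [← mul_assoc, ← Real.rpow_add (by positivity), neg_add_cancel, Real.rpow_zero,
            one_mul]
      _ ≤ A * (1 + |(k : ℝ)|) ^ (-s) := by rw [mul_comm]; gcongr; exact ha k
  calc ‖a (n - m) * b m‖ ≤ A * (1 + |((n - m : ℤ) : ℝ)|) ^ (-s) * ‖b m‖ :=
        (norm_mul_le _ _).trans (by gcongr; exact ha' _)
    _ ≤ A * ((1 + |(n : ℝ)|) ^ (-s) * (1 + |(m : ℝ)|) ^ (-s)) * ‖b m‖ := by
        push_cast
        gcongr
        exact one_add_abs_sub_rpow_le (by linarith) _ _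
    _ = _ := by ring

lemma summable_and_rpow_mul_norm_tsum_le {R : Type*} [SeminormedRing R] {s A : ℝ} (hs : s ≤ 0)
    {a b : ℤ → R} (ha : ∀ k : ℤ, (1 + |(k : ℝ)|) ^ s * ‖a k‖ ≤ A)
    (hb : Summable fun m : ℤ => (1 + |(m : ℝ)|) ^ (-s) * ‖b m‖) (n : ℤ) :
    (Summable fun m : ℤ => ‖a (n - m) * b m‖) ∧
      (1 + |(n : ℝ)|) ^ s * ‖∑' m : ℤ, a (n - m) * b m‖ ≤
        A * ∑' m : ℤ, (1 + |(m : ℝ)|) ^ (-s) * ‖b m‖ := by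
  have hle := norm_apply_sub_mul_le hs ha b n
  have hdom := hb.mul_left (A * (1 + |(n : ℝ)|) ^ (-s))
  have hsum : Summable fun m : ℤ => ‖a (n - m) * b m‖ :=
    .of_nonneg_of_le (fun m => norm_nonneg _) hle hdom
  refine ⟨hsum, ?_⟩
  calc (1 + |(n : ℝ)|) ^ s * ‖∑' m : ℤ, a (n - m) * b m‖
      ≤ (1 + |(n : ℝ)|) ^ s * (A * (1 + |(n : ℝ)|) ^ (-s) *
          ∑' m : ℤ, (1 + |(m : ℝ)|) ^ (-s) * ‖b m‖) := by
        rw [← tsum_mul_left]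
        gcongr
        exact (norm_tsum_le_tsum_norm hsum).trans (hsum.tsum_le_tsum hle hdom)
    _ = A * ∑' m : ℤ, (1 + |(m : ℝ)|) ^ (-s) * ‖b m‖ := by
        have hcancel : (1 + |(n : ℝ)|) ^ s * (1 + |(n : ℝ)|) ^ (-s) = 1 := by
          rw [← Real.rpow_add (by positivity), add_neg_cancel, Real.rpow_zero]
        linear_combination (A * ∑' m : ℤ, (1 + |(m : ℝ)|) ^ (-s) * ‖b m‖) * hcancel

theorem stmt_7_general (s t : ℝ) (hs₂ : s ≤ 0)
    (ht₁ : -s - 3 / 2 < t) :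
    ∃ C : ℝ, 0 < C ∧ ∀ a b : ℤ → ℂ,
      BddAbove (Set.range fun k : ℤ => (1 + |k| : ℝ) ^ s * ‖a k‖) →
      Summable (fun k : ℤ => ((1 + |k| : ℝ) ^ (t + 2) * ‖b k‖) ^ 2) →
      (∀ n : ℤ, Summable fun m : ℤ => ‖a (n - m) * b m‖) ∧
      BddAbove (Set.range fun n : ℤ =>
        (1 + |n| : ℝ) ^ s * ‖∑' m : ℤ, a (n - m) * b m‖) ∧
      (⨆ n : ℤ, (1 + |n| : ℝ) ^ s * ‖∑' m : ℤ, a (n - m) * b m‖)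
        ≤ C * (⨆ k : ℤ, (1 + |k| : ℝ) ^ s * ‖a k‖)
            * (∑' k : ℤ, ((1 + |k| : ℝ) ^ (t + 2) * ‖b k‖) ^ 2) ^ ((1 : ℝ) / 2) := by
  have hru : -s - (t + 2) < -(1 / 2) := by linarith
  set K := ∑' m : ℤ, (1 + |(m : ℝ)|) ^ ((-s - (t + 2)) * 2)
  have hK : 0 < K :=
    (summable_one_add_abs_rpow (by linarith)).tsum_pos (fun m => by positivity) 0 (by simp)
  refine ⟨K ^ ((1 : ℝ) / 2), by positivity, fun a b ha hb => ?_⟩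
  simp only [Int.cast_abs] at ha hb ⊢
  set A := ⨆ k : ℤ, (1 + |(k : ℝ)|) ^ s * ‖a k‖
  have hA : 0 ≤ A := (mul_nonneg (by positivity) (norm_nonneg _)).trans (le_ciSup ha 0)
  obtain ⟨hb₁, hb₁_le⟩ := summable_and_tsum_rpow_mul_norm_le hru hb
  have hconv := summable_and_rpow_mul_norm_tsum_le hs₂ (le_ciSup ha) hb₁
  have hbound : ∀ n : ℤ, (1 + |(n : ℝ)|) ^ s * ‖∑' m : ℤ, a (n - m) * b m‖ ≤
      K ^ ((1 : ℝ) / 2) * A *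
        (∑' k : ℤ, ((1 + |(k : ℝ)|) ^ (t + 2) * ‖b k‖) ^ 2) ^ ((1 : ℝ) / 2) := fun n =>
    (hconv n).2.trans <| by rw [mul_comm _ A, mul_assoc]; gcongr
  exact ⟨fun n => (hconv n).1, ⟨_, Set.forall_mem_range.2 hbound⟩, ciSup_le hbound⟩

/-- Convolution estimate: for `−1/2 ≤ s ≤ 0` and `−s−3/2 < t < 0` there is `C_{s,t} > 0`
such that for all `a ∈ ℓ^{s,∞}` and `b ∈ ℓ^{t+2,2}`, the convolution `a*b` is well defined
(each series converges absolutely) and `‖a*b‖_{s,∞} ≤ C_{s,t} ‖a‖_{s,∞} ‖b‖_{t+2,2}`. -/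
theorem stmt_7 (s t : ℝ) (hs₁ : -(1 / 2) ≤ s) (hs₂ : s ≤ 0)
    (ht₁ : -s - 3 / 2 < t) (ht₂ : t < 0) :
    ∃ C : ℝ, 0 < C ∧ ∀ a b : ℤ → ℂ,
      BddAbove (Set.range fun k : ℤ => (1 + |k| : ℝ) ^ s * ‖a k‖) →
      Summable (fun k : ℤ => ((1 + |k| : ℝ) ^ (t + 2) * ‖b k‖) ^ 2) →
      (∀ n : ℤ, Summable fun m : ℤ => ‖a (n - m) * b m‖) ∧
      BddAbove (Set.range fun n : ℤ =>
        (1 + |n| : ℝ) ^ s * ‖∑' m : ℤ, a (n - m) * b m‖) ∧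
      (⨆ n : ℤ, (1 + |n| : ℝ) ^ s * ‖∑' m : ℤ, a (n - m) * b m‖)
        ≤ C * (⨆ k : ℤ, (1 + |k| : ℝ) ^ s * ‖a k‖)
            * (∑' k : ℤ, ((1 + |k| : ℝ) ^ (t + 2) * ‖b k‖) ^ 2) ^ ((1 : ℝ) / 2) :=
  stmt_7_general s t hs₂ ht₁
end

section
/- Let s ∈ ℝ, σ < s and 1 ≤ p < ∞ with (s − σ)p > 1. Let (x^{(m)})_{m≥1} be a sequence in ℓ^{s,∞} with sup_{m≥1} ‖x^{(m)}‖_{s,∞} < ∞, and let x ∈ ℓ^{s,∞}. Then x^{(m)}_n → x_n for every n ∈ ℤ if and only if ‖x^{(m)} − x‖_{σ,p} → 0 as m → ∞. -/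
/-!
Both sides reduce to the vanishing of the terms `(⟨k⟩^σ ‖x^{(m)}_k - x_k‖)^p` of the
`ℓ^{σ,p}` sum. The uniform `ℓ^{s,∞}` bound dominates these terms by `C ⟨k⟩^{-(s-σ)p}`,
which is summable because `(s - σ)p > 1`; so the sum tends to `0` iff each term does,
by dominated convergence in one direction and `term ≤ sum` in the other.
-/

open Filter Topology

theorem summable_one_add_abs_int_rpow_neg {r : ℝ} (hr : 1 < r) :
    Summable fun k : ℤ => (1 + |(k : ℝ)|) ^ (-r) := by
  refine Summable.of_norm_bounded_eventually (Real.summable_abs_int_rpow hr) ?_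
  filter_upwards [(Set.finite_singleton (0 : ℤ)).compl_mem_cofinite] with k hk
  have hk : 0 < |(k : ℝ)| := by simpa using hk
  rw [Real.norm_of_nonneg (by positivity)]
  exact Real.rpow_le_rpow_of_nonpos hk (by linarith) (by linarith)

theorem Real.tendsto_rpow_nhds_zero_iff {α : Type*} {l : Filter α} {f : α → ℝ}
    (hf : ∀ a, 0 ≤ f a) {r : ℝ} (hr : 0 < r) :
    Tendsto (fun a => f a ^ r) l (𝓝 0) ↔ Tendsto f l (𝓝 0) := by
  have hcont {t : ℝ} (ht : 0 < t) {g : α → ℝ} (hg : Tendsto g l (𝓝 0)) :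
      Tendsto (fun a => g a ^ t) l (𝓝 0) := by
    simpa [Real.zero_rpow ht.ne'] using hg.rpow_const (Or.inr ht.le)
  refine ⟨fun h => ?_, hcont hr⟩
  simpa [← Real.rpow_mul (hf _), hr.ne'] using hcont (inv_pos.2 hr) h

theorem tendsto_tsum_nhds_zero_iff_of_le_summable {α ι : Type*} {l : Filter α}
    {f : α → ι → ℝ} {bound : ι → ℝ} (hbound : Summable bound) (hf : ∀ a k, 0 ≤ f a k)
    (hfb : ∀ a k, f a k ≤ bound k) :
    Tendsto (fun a => ∑' k, f a k) l (𝓝 0) ↔ ∀ k, Tendsto (fun a => f a k) l (𝓝 0) := by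
  refine ⟨fun h k => ?_, fun h => ?_⟩
  · refine squeeze_zero (fun a => hf a k) (fun a => ?_) h
    exact (hbound.of_nonneg_of_le (hf a) (hfb a)).le_tsum k fun j _ => hf a j
  · simpa using tendsto_tsum_of_dominated_convergence hbound h
      (Eventually.of_forall fun a k => by rw [Real.norm_of_nonneg (hf a k)]; exact hfb a k)

theorem rpow_mul_norm_sub_rpow_le {E : Type*} [SeminormedAddCommGroup E] {a b : E}
    {w s σ p A B : ℝ} (hw : 0 < w) (hp : 0 ≤ p) (ha : w ^ s * ‖a‖ ≤ A) (hb : w ^ s * ‖b‖ ≤ B) :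
    (w ^ σ * ‖a - b‖) ^ p ≤ (A + B) ^ p * w ^ (-((s - σ) * p)) := by
  have hsub : w ^ s * ‖a - b‖ ≤ A + B := by
    nlinarith [norm_sub_le a b, Real.rpow_pos_of_pos hw s]
  have hAB : 0 ≤ A + B := (by positivity : 0 ≤ w ^ s * ‖a - b‖).trans hsub
  have hσ : w ^ σ * ‖a - b‖ ≤ (A + B) * w ^ (σ - s) := by
    rw [Real.rpow_sub hw, mul_div_assoc', le_div_iff₀ (by positivity)]
    nlinarith [Real.rpow_pos_of_pos hw σ]
  calc (w ^ σ * ‖a - b‖) ^ p ≤ ((A + B) * w ^ (σ - s)) ^ p :=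
        Real.rpow_le_rpow (by positivity) hσ hp
    _ = (A + B) ^ p * w ^ (-((s - σ) * p)) := by
        rw [Real.mul_rpow hAB (by positivity), ← Real.rpow_mul hw.le, ← neg_mul, neg_sub]

theorem stmt_11_general (s σ p : ℝ) (hp₁ : 1 ≤ p) (hsp : (s - σ) * p > 1)
    (x : ℕ → ℤ → ℂ) (x₀ : ℤ → ℂ) (M : ℝ)
    (hM : ∀ m : ℕ, ∀ k : ℤ, (1 + |k| : ℝ) ^ s * ‖x m k‖ ≤ M)
    (hx₀ : BddAbove (Set.range fun k : ℤ => (1 + |k| : ℝ) ^ s * ‖x₀ k‖)) :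
    (∀ n : ℤ, Tendsto (fun m => x m n) atTop (𝓝 (x₀ n)))
      ↔ Tendsto
          (fun m => (∑' k : ℤ, ((1 + |k| : ℝ) ^ σ * ‖x m k - x₀ k‖) ^ p) ^ (1 / p))
          atTop (𝓝 0) := by
  simp only [Int.cast_abs] at hM hx₀ ⊢
  obtain ⟨M₀, hM₀⟩ := hx₀
  have hp : 0 < p := by linarith
  have hbound (m : ℕ) (k : ℤ) : ((1 + |(k : ℝ)|) ^ σ * ‖x m k - x₀ k‖) ^ p
      ≤ (M + M₀) ^ p * (1 + |(k : ℝ)|) ^ (-((s - σ) * p)) :=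
    rpow_mul_norm_sub_rpow_le (by positivity) hp.le (hM m k) (hM₀ ⟨k, rfl⟩)
  rw [Real.tendsto_rpow_nhds_zero_iff (fun m => tsum_nonneg fun k => by positivity)
      (one_div_pos.2 hp),
    tendsto_tsum_nhds_zero_iff_of_le_summable
      ((summable_one_add_abs_int_rpow_neg hsp).mul_left _) (fun m k => by positivity) hbound]
  refine forall_congr' fun k => ?_
  have hw : (1 + |(k : ℝ)|) ^ σ ≠ 0 := by positivity
  rw [Real.tendsto_rpow_nhds_zero_iff (fun m => by positivity) hp,
    tendsto_iff_norm_sub_tendsto_zero, ← tendsto_const_smul_iff₀ hw, smul_zero]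
  simp only [smul_eq_mul]

/-- For a `‖·‖_{s,∞}`-norm bounded sequence in `ℓ^{s,∞}`, componentwise convergence to
`x₀ ∈ ℓ^{s,∞}` is equivalent to convergence in the `‖·‖_{σ,p}` norm, provided `σ < s`,
`1 ≤ p < ∞` and `(s−σ)p > 1`. -/
theorem stmt_11 (s σ p : ℝ) (hσ : σ < s) (hp₁ : 1 ≤ p) (hsp : (s - σ) * p > 1)
    (x : ℕ → ℤ → ℂ) (x₀ : ℤ → ℂ) (M : ℝ)
    (hM : ∀ m : ℕ, ∀ k : ℤ, (1 + |k| : ℝ) ^ s * ‖x m k‖ ≤ M)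
    (hx₀ : BddAbove (Set.range fun k : ℤ => (1 + |k| : ℝ) ^ s * ‖x₀ k‖)) :
    (∀ n : ℤ, Tendsto (fun m => x m n) atTop (𝓝 (x₀ n)))
      ↔ Tendsto
          (fun m => (∑' k : ℤ, ((1 + |k| : ℝ) ^ σ * ‖x m k - x₀ k‖) ^ p) ^ (1 / p))
          atTop (𝓝 0) :=
  stmt_11_general s σ p hp₁ hsp x x₀ M hM hx₀
end

section
/- Let s ∈ ℝ and 1 ≤ p < ∞, and let z = (z_k)_{k∈ℤ} ∈ ℓ^{s,p} satisfy z_0 = 0 and z_{−k} = conj(z_k) for all k ≥ 1. Then the torus T_z := { z̃ ∈ ℓ^{s,p} : z̃_0 = 0, z̃_{−k} = conj(z̃_k) and |z̃_k| = |z_k| for all k ≥ 1 } is a compact subset of ℓ^{s,p} with respect to the norm topology. -/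
open Filter Topology ComplexConjugate

/-!
On the torus every coordinate is confined to the circle of radius `‖z k‖`, so the torus is a
closed subset of the compact product `∏ₖ closedBall 0 ‖z k‖` and hence compact for coordinatewise
convergence. A coordinatewise convergent sequence in the torus also converges in `ℓ^{s,p}`: its
distance to the limit is bounded termwise by `2 ‖z k‖`, so dominated convergence applies to the
series defining `‖·‖_{s,p}^p`.
-/

def torus (z : ℤ → ℂ) : Set (ℤ → ℂ) :=
  {w | w 0 = 0 ∧ (∀ k : ℤ, 1 ≤ k → w (-k) = conj (w k)) ∧ ∀ k : ℤ, 1 ≤ k → ‖w k‖ = ‖z k‖}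

lemma norm_neg_eq_of_conj_symm {w : ℤ → ℂ} (hw : ∀ k : ℤ, 1 ≤ k → w (-k) = conj (w k))
    (k : ℤ) : ‖w (-k)‖ = ‖w k‖ := by
  rcases lt_trichotomy k 0 with hk | rfl | hk
  · have := hw (-k) (by omega)
    rw [neg_neg] at this
    rw [this, Complex.norm_conj]
  · rw [neg_zero]
  · rw [hw k hk, Complex.norm_conj]

lemma norm_eq_of_mem_torus {z w : ℤ → ℂ} (hz0 : z 0 = 0)
    (hzsym : ∀ k : ℤ, 1 ≤ k → z (-k) = conj (z k)) (hw : w ∈ torus z) (k : ℤ) :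
    ‖w k‖ = ‖z k‖ := by
  obtain ⟨hw0, hwsym, hwnorm⟩ := hw
  rcases lt_trichotomy k 0 with hk | rfl | hk
  · rw [← norm_neg_eq_of_conj_symm hwsym, ← norm_neg_eq_of_conj_symm hzsym,
      hwnorm (-k) (by omega)]
  · rw [hw0, hz0]
  · exact hwnorm k hk

lemma isClosed_torus (z : ℤ → ℂ) : IsClosed (torus z) := by
  refine (isClosed_eq (continuous_apply 0) continuous_const).and (IsClosed.and ?_ ?_) <;>
    simp only [Set.ofPred_forall]
  · exact isClosed_iInter fun k => isClosed_iInter fun _ =>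
      isClosed_eq (continuous_apply (-k)) (Complex.continuous_conj.comp (continuous_apply k))
  · exact isClosed_iInter fun k => isClosed_iInter fun _ =>
      isClosed_eq (continuous_apply k).norm continuous_const

lemma isCompact_torus {z : ℤ → ℂ} (hz0 : z 0 = 0)
    (hzsym : ∀ k : ℤ, 1 ≤ k → z (-k) = conj (z k)) : IsCompact (torus z) := by
  refine (isCompact_univ_pi fun k => isCompact_closedBall (0 : ℂ) ‖z k‖).of_isClosed_subset
    (isClosed_torus z) fun w hw => Set.mem_univ_pi.mpr fun k => ?_
  rw [mem_closedBall_zero_iff, norm_eq_of_mem_torus hz0 hzsym hw k]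

lemma tendsto_weighted_lpNorm_sub_of_tendsto_pi {α β E : Type*} [NormedAddCommGroup E]
    {l : Filter β} {p : ℝ} (hp : 0 < p) {ω m : α → ℝ} (hω : ∀ k, 0 ≤ ω k)
    (hm : Summable fun k => (ω k * m k) ^ p) {a : β → α → E} {b : α → E}
    (ha : ∀ j k, ‖a j k‖ ≤ m k) (hb : ∀ k, ‖b k‖ ≤ m k) (hab : Tendsto a l (𝓝 b)) :
    Tendsto (fun j => (∑' k, (ω k * ‖a j k - b k‖) ^ p) ^ (1 / p)) l (𝓝 0) := by
  have hterm : ∀ k, Tendsto (fun j => (ω k * ‖a j k - b k‖) ^ p) l (𝓝 0) := by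
    intro k
    have hdist : Tendsto (fun j => ω k * ‖a j k - b k‖) l (𝓝 (ω k * ‖b k - b k‖)) :=
      (((tendsto_pi_nhds.mp hab k).sub tendsto_const_nhds).norm).const_mul (ω k)
    rw [sub_self, norm_zero, mul_zero] at hdist
    simpa [Real.zero_rpow hp.ne'] using hdist.rpow_const (Or.inr hp.le)
  have hbound : ∀ j k, ‖(ω k * ‖a j k - b k‖) ^ p‖ ≤ 2 ^ p * (ω k * m k) ^ p := by
    intro j k
    have hsub : ‖a j k - b k‖ ≤ 2 * m k := by
      linarith [norm_sub_le (a j k) (b k), ha j k, hb k]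
    rw [Real.norm_of_nonneg (by have := hω k; positivity),
      ← Real.mul_rpow zero_le_two (mul_nonneg (hω k) ((norm_nonneg _).trans (hb k)))]
    refine Real.rpow_le_rpow (by have := hω k; positivity) ?_ hp.le
    nlinarith [hω k]
  have hsum := tendsto_tsum_of_dominated_convergence (hm.mul_left (2 ^ p)) hterm
    (Eventually.of_forall hbound)
  rw [tsum_zero] at hsum
  have hroot := hsum.rpow_const (p := 1 / p) (Or.inr (one_div_pos.mpr hp).le)
  rwa [Real.zero_rpow (one_div_pos.mpr hp).ne'] at hroot

/-- For `1 ≤ p < ∞` and `z ∈ ℓ^{s,p}` with `z_0 = 0` and `z_{−k} = conj z_k`, the torus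
`T_z = {z̃ ∈ ℓ^{s,p} : z̃_0 = 0, z̃_{−k} = conj z̃_k, |z̃_k| = |z_k| ∀ k ≥ 1}` is compact in the
norm topology of `ℓ^{s,p}` (formulated via sequential compactness, which is equivalent in a
metric space): every sequence in `T_z` has a subsequence converging in the `‖·‖_{s,p}`
distance to an element of `T_z`. -/
theorem stmt_13 (s p : ℝ) (hp : 1 ≤ p) (z : ℤ → ℂ) (hz0 : z 0 = 0)
    (hzsym : ∀ k : ℤ, 1 ≤ k → z (-k) = conj (z k))
    (hz : Summable fun k : ℤ => ((1 + |k| : ℝ) ^ s * ‖z k‖) ^ p)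
    (u : ℕ → ℤ → ℂ)
    (hu : ∀ j : ℕ, u j 0 = 0 ∧ (∀ k : ℤ, 1 ≤ k → u j (-k) = conj (u j k)) ∧
        ∀ k : ℤ, 1 ≤ k → ‖u j k‖ = ‖z k‖) :
    ∃ φ : ℕ → ℕ, StrictMono φ ∧ ∃ v : ℤ → ℂ,
      (v 0 = 0 ∧ (∀ k : ℤ, 1 ≤ k → v (-k) = conj (v k)) ∧
        ∀ k : ℤ, 1 ≤ k → ‖v k‖ = ‖z k‖) ∧
      Tendsto
        (fun j => (∑' k : ℤ, ((1 + |k| : ℝ) ^ s * ‖u (φ j) k - v k‖) ^ p) ^ (1 / p))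
        atTop (𝓝 0) := by
  obtain ⟨v, hv, φ, hφ, hlim⟩ := (isCompact_torus hz0 hzsym).isSeqCompact hu
  refine ⟨φ, hφ, v, hv, ?_⟩
  exact tendsto_weighted_lpNorm_sub_of_tendsto_pi (by linarith) (fun k => by positivity) hz
    (fun j k => (norm_eq_of_mem_torus hz0 hzsym (hu (φ j)) k).le)
    (fun k => (norm_eq_of_mem_torus hz0 hzsym hv k).le) hlim
end

section
/- Let −1/2 < s ≤ 0, let q = (q_j)_{j∈ℤ} be a complex sequence with q_0 = 0 and ‖q‖_{s,∞} < ∞, let λ ∈ ℂ, and let g = (g_m)_{m∈ℤ} satisfy ‖g‖_{s,∞} < ∞. Suppose f = (f_m)_{m∈ℤ} satisfies ∑_{m∈ℤ} ⟨m⟩² |f_m|² < ∞ and, for every m ∈ ℤ, (m²π² − λ) f_m + ∑_{k∈ℤ} q_{m−k} f_k = g_m, where each such series converges absolutely. Then sup_{m∈ℤ} ⟨m⟩^{s+2} |f_m| < ∞. -/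
/-! Once `|m|` is large, `‖m²π² - λ‖ ≥ ⟨m⟩²`, so it suffices that `g - q ∗ f` lies in
`ℓ^{s,∞}`. For `s ≤ 0`, Peetre's inequality `⟨m - k⟩^{-s} ≤ ⟨m⟩^{-s} ⟨k⟩^{-s}` shows that
convolution with `q ∈ ℓ^{s,∞}` maps `ℓ^{-s,1}` into `ℓ^{s,∞}`; and `f ∈ ℓ^{-s,1}` by
Cauchy–Schwarz against `⟨k⟩^{-s-1} ∈ ℓ²`, which is where `s > -1/2` is needed. The finitely
many remaining `m` are harmless. -/

open Filter Real

lemma summable_one_add_norm_int_rpow {r : ℝ} (hr : r < -1) :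
    Summable fun k : ℤ => (1 + ‖k‖) ^ r := by
  refine (summable_abs_int_rpow (b := -r) (by linarith)).of_norm_bounded_eventually ?_
  filter_upwards [eventually_cofinite_ne 0] with k hk
  have hk1 : (1 : ℝ) ≤ |(k : ℝ)| := by exact_mod_cast Int.one_le_abs hk
  rw [neg_neg, norm_of_nonneg (by positivity), Int.norm_eq_abs]
  exact rpow_le_rpow_of_nonpos (by linarith) (by linarith) (by linarith)

lemma Summable.mul_of_summable_sq {ι : Type*} {a b : ι → ℝ} (ha : Summable fun i => a i ^ 2)
    (hb : Summable fun i => b i ^ 2) : Summable fun i => a i * b i :=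
  ((ha.add hb).div_const 2).of_norm_bounded fun i => by
    rw [norm_eq_abs, abs_mul]
    nlinarith [sq_abs (a i), sq_abs (b i), two_mul_le_add_sq |a i| |b i|]

lemma summable_one_add_norm_rpow_mul_norm {E : Type*} [SeminormedAddCommGroup E] {s : ℝ}
    (hs : -(1 / 2) < s) {f : ℤ → E} (hf : Summable fun k : ℤ => (1 + ‖k‖) ^ 2 * ‖f k‖ ^ 2) :
    Summable fun k : ℤ => (1 + ‖k‖) ^ (-s) * ‖f k‖ := by
  have hweight : Summable fun k : ℤ => ((1 + ‖k‖) ^ (-s - 1)) ^ 2 :=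
    (summable_one_add_norm_int_rpow (r := (-s - 1) * (2 : ℕ)) (by push_cast; linarith)).congr
      fun k => rpow_mul_natCast (by positivity) _ _
  refine (hweight.mul_of_summable_sq (b := fun k => (1 + ‖k‖) * ‖f k‖)
    (by simpa only [mul_pow] using hf)).congr fun k => ?_
  rw [← mul_assoc, ← rpow_add_one (by positivity), sub_add_cancel]

lemma one_add_norm_sub_rpow_le {G : Type*} [SeminormedAddCommGroup G] {t : ℝ} (ht : 0 ≤ t)
    (x y : G) : (1 + ‖x - y‖) ^ t ≤ (1 + ‖x‖) ^ t * (1 + ‖y‖) ^ t := by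
  rw [← mul_rpow (by positivity) (by positivity)]
  gcongr
  nlinarith [norm_sub_le x y, norm_nonneg x, norm_nonneg y]

lemma one_add_norm_rpow_mul_norm_tsum_mul_sub_le {G R : Type*} [SeminormedAddCommGroup G]
    [NormedRing R] {s C : ℝ} (hs : s ≤ 0) {q f : G → R} (hq : ∀ j, (1 + ‖j‖) ^ s * ‖q j‖ ≤ C)
    (hf : Summable fun k => (1 + ‖k‖) ^ (-s) * ‖f k‖) (m : G) :
    (1 + ‖m‖) ^ s * ‖∑' k, q (m - k) * f k‖ ≤ C * ∑' k, (1 + ‖k‖) ^ (-s) * ‖f k‖ := by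
  have hpos : ∀ x : G, 0 < 1 + ‖x‖ := fun x => by positivity
  have hC : 0 ≤ C := (mul_nonneg (rpow_nonneg (hpos 0).le _) (norm_nonneg _)).trans (hq 0)
  have hq' : ∀ j, ‖q j‖ ≤ C * (1 + ‖j‖) ^ (-s) := fun j => by
    rw [rpow_neg (hpos j).le, le_mul_inv_iff₀ (rpow_pos_of_pos (hpos j) s), mul_comm]
    exact hq j
  have hterm : ∀ k, ‖q (m - k) * f k‖ ≤ (1 + ‖m‖) ^ (-s) * (C * ((1 + ‖k‖) ^ (-s) * ‖f k‖)) :=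
    fun k => calc
      ‖q (m - k) * f k‖ ≤ C * (1 + ‖m - k‖) ^ (-s) * ‖f k‖ :=
        (norm_mul_le _ _).trans (by gcongr; exact hq' _)
      _ ≤ C * ((1 + ‖m‖) ^ (-s) * (1 + ‖k‖) ^ (-s)) * ‖f k‖ := by
        gcongr
        exact one_add_norm_sub_rpow_le (by linarith) m k
      _ = _ := by ring
  calc (1 + ‖m‖) ^ s * ‖∑' k, q (m - k) * f k‖
      ≤ (1 + ‖m‖) ^ s * ((1 + ‖m‖) ^ (-s) * (C * ∑' k, (1 + ‖k‖) ^ (-s) * ‖f k‖)) := by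
        gcongr
        exact tsum_of_norm_bounded ((hf.hasSum.mul_left C).mul_left _) hterm
    _ = C * ∑' k, (1 + ‖k‖) ^ (-s) * ‖f k‖ := by
        rw [rpow_neg (hpos m).le, mul_inv_cancel_left₀ (rpow_pos_of_pos (hpos m) s).ne']

lemma one_add_abs_sq_le_norm_sq_mul_pi_sq_sub {x : ℝ} {lam : ℂ} (hx : 1 + ‖lam‖ ≤ |x|) :
    (1 + |x|) ^ 2 ≤ ‖(x : ℂ) ^ 2 * (π : ℂ) ^ 2 - lam‖ := by
  have hnorm : ‖(x : ℂ) ^ 2 * (π : ℂ) ^ 2‖ = |x| ^ 2 * π ^ 2 := by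
    rw [norm_mul, norm_pow, norm_pow, Complex.norm_real, Complex.norm_real, norm_eq_abs,
      norm_eq_abs, abs_of_pos pi_pos]
  have hpi : 9 ≤ π ^ 2 := by nlinarith [pi_gt_three]
  have hlam := norm_nonneg lam
  calc (1 + |x|) ^ 2 ≤ |x| ^ 2 * π ^ 2 - ‖lam‖ := by nlinarith
    _ ≤ ‖(x : ℂ) ^ 2 * (π : ℂ) ^ 2 - lam‖ := hnorm ▸ norm_sub_norm_le _ _

lemma Int.eventually_le_norm_cofinite (R : ℝ) : ∀ᶠ m : ℤ in cofinite, R ≤ ‖m‖ :=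
  (cocompact_eq_cofinite ℤ ▸ tendsto_norm_cocompact_atTop).eventually_ge_atTop R

theorem stmt_15_general (s : ℝ) (hs₁ : -(1 / 2) < s) (hs₂ : s ≤ 0)
    (q : ℤ → ℂ)
    (hq : BddAbove (Set.range fun j : ℤ => (1 + |j| : ℝ) ^ s * ‖q j‖))
    (lam : ℂ) (g : ℤ → ℂ)
    (hg : BddAbove (Set.range fun m : ℤ => (1 + |m| : ℝ) ^ s * ‖g m‖))
    (f : ℤ → ℂ)
    (hf : Summable fun m : ℤ => (1 + |m| : ℝ) ^ 2 * ‖f m‖ ^ 2)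
    (heq : ∀ m : ℤ,
      ((m : ℂ) ^ 2 * (Real.pi : ℂ) ^ 2 - lam) * f m + ∑' k : ℤ, q (m - k) * f k = g m) :
    ∃ M : ℝ, ∀ m : ℤ, (1 + |m| : ℝ) ^ (s + 2) * ‖f m‖ ≤ M := by
  simp only [Int.cast_abs, ← Int.norm_eq_abs] at hq hg hf ⊢
  obtain ⟨Cq, hCq⟩ := hq
  obtain ⟨Cg, hCg⟩ := hg
  rw [mem_upperBounds, Set.forall_mem_range] at hCq hCg
  have hconv := one_add_norm_rpow_mul_norm_tsum_mul_sub_le hs₂ hCq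
    (summable_one_add_norm_rpow_mul_norm hs₁ hf)
  set S := ∑' k : ℤ, (1 + ‖k‖) ^ (-s) * ‖f k‖
  have hlarge : ∀ᶠ m : ℤ in cofinite, (1 + ‖m‖) ^ (s + 2) * ‖f m‖ ≤ Cg + Cq * S := by
    filter_upwards [Int.eventually_le_norm_cofinite (1 + ‖lam‖)] with m hm
    have hmult : (1 + ‖m‖) ^ 2 ≤ ‖(m : ℂ) ^ 2 * (π : ℂ) ^ 2 - lam‖ := by
      simpa [Int.norm_eq_abs] using
        one_add_abs_sq_le_norm_sq_mul_pi_sq_sub (x := m) (by rwa [← Int.norm_eq_abs])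
    calc (1 + ‖m‖) ^ (s + 2) * ‖f m‖ = (1 + ‖m‖) ^ s * ((1 + ‖m‖) ^ 2 * ‖f m‖) := by
          rw [rpow_add (by positivity), rpow_two, mul_assoc]
      _ ≤ (1 + ‖m‖) ^ s * ‖g m - ∑' k : ℤ, q (m - k) * f k‖ := by
          rw [← eq_sub_of_add_eq (heq m), norm_mul]
          gcongr
      _ ≤ (1 + ‖m‖) ^ s * ‖g m‖ + (1 + ‖m‖) ^ s * ‖∑' k : ℤ, q (m - k) * f k‖ := by
          rw [← mul_add]
          gcongr
          exact norm_sub_le _ _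
      _ ≤ Cg + Cq * S := add_le_add (hCg m) (hconv m)
  obtain ⟨M, hM⟩ := (isBoundedUnder_of_eventually_le hlarge).bddAbove_range_of_cofinite
  exact ⟨M, fun m => hM ⟨m, rfl⟩⟩

/-- Regularity of solutions (Fourier-coefficient form): let `−1/2 < s ≤ 0`, let `q ∈ ℓ^{s,∞}`
with `q_0 = 0`, `λ ∈ ℂ`, `g ∈ ℓ^{s,∞}`. If `f` satisfies `∑ ⟨m⟩²|f_m|² < ∞` and the equation
`(m²π² − λ) f_m + ∑_k q_{m−k} f_k = g_m` for every `m` (with each series converging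
absolutely), then `sup_m ⟨m⟩^{s+2} |f_m| < ∞`. -/
theorem stmt_15 (s : ℝ) (hs₁ : -(1 / 2) < s) (hs₂ : s ≤ 0)
    (q : ℤ → ℂ) (hq0 : q 0 = 0)
    (hq : BddAbove (Set.range fun j : ℤ => (1 + |j| : ℝ) ^ s * ‖q j‖))
    (lam : ℂ) (g : ℤ → ℂ)
    (hg : BddAbove (Set.range fun m : ℤ => (1 + |m| : ℝ) ^ s * ‖g m‖))
    (f : ℤ → ℂ)
    (hf : Summable fun m : ℤ => (1 + |m| : ℝ) ^ 2 * ‖f m‖ ^ 2)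
    (hconv : ∀ m : ℤ, Summable fun k : ℤ => ‖q (m - k) * f k‖)
    (heq : ∀ m : ℤ,
      ((m : ℂ) ^ 2 * (Real.pi : ℂ) ^ 2 - lam) * f m + ∑' k : ℤ, q (m - k) * f k = g m) :
    ∃ M : ℝ, ∀ m : ℤ, (1 + |m| : ℝ) ^ (s + 2) * ‖f m‖ ≤ M :=
  stmt_15_general s hs₁ hs₂ q hq lam g hg f hf heq
end

section
/- Let −1/2 < s ≤ 0, let n ≥ 1 be an integer, and let K > 0 satisfy 2K ≤ n^{1/2 − |s|}. Let a, b⁺, b⁻ be complex analytic functions on an open set containing the strip S_n = {λ ∈ ℂ : |Re λ − n²π²| ≤ 12n} such that sup_{λ∈S_n} |a(λ)| ≤ K and ⟨2n⟩^{s} sup_{λ∈S_n} |b^{±}(λ)| ≤ 2K. Then the function χ(λ) := (λ − n²π² − a(λ))² − b⁺(λ)b⁻(λ) has exactly two zeros in S_n counted with multiplicity; both zeros lie in the disc D_n = {λ ∈ ℂ : |λ − n²π²| ≤ 4 n^{1/2}}, and if ξ₁, ξ₂ denote these zeros then |ξ₁ − ξ₂| ≤ √6 · sup_{λ∈S_n}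 |b⁺(λ) b⁻(λ)|^{1/2}. -/
/-!
Put `r = √n`, `μ = n²π²`, `g = b⁺b⁻` and `f(λ) = λ - μ - a(λ)`, so `χ = f² - g`. The hypotheses
give `|a| ≤ r/2` and `|g| ≤ 3r²` on the strip, which contains the disc of radius `12r²` about `μ`.
A zero of `χ` has `|f|² = |g| ≤ 3r²`, so it lies within `9r/4` of `μ`; and since `|χ| ≥ 4r²` on
the circle `|λ - μ| = 4r` while `|χ(μ)| < 4r²`, the minimum modulus principle gives a zero `ξ₁`.
With `Δ` the difference quotient at `ξ₁`, `χ(λ) = (λ - ξ₁)(1 - Δa(λ))(λ - Tλ)` where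
`Tλ = μ - f(ξ₁) + a(λ) + Δg(λ)/(1 - Δa(λ))`. Cauchy estimates on discs of radius comparable to
`r²` make `Δa`, `Δg` small and `T` a `1/2`-contraction of the disc `D` of radius `4r`, with fixed
point `ξ₂`; then `|λ - Tλ| ≥ |λ - ξ₂|/2` on `D` shows that `χ / ((λ - ξ₁)(λ - ξ₂))` has no zero
there. Finally `|ξ₁ - ξ₂| ≤ |f(ξ₁)| + |f(ξ₂)| + |a(ξ₁) - a(ξ₂)| ≤ 2 sup |g|^{1/2} + |ξ₁ - ξ₂|/16`,
as `a` is `1/16`-Lipschitz on `D`, and `32/15 < √6`.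
-/

open Metric Set Filter Topology
open scoped NNReal

/-- The vertical strip `S_n = {λ ∈ ℂ : |Re λ − n²π²| ≤ 12n}`. -/
def strip (n : ℕ) : Set ℂ :=
  {lam : ℂ | |lam.re - (n : ℝ) ^ 2 * Real.pi ^ 2| ≤ 12 * n}

theorem closedBall_subset_closedBall_add {X : Type*} [PseudoMetricSpace X] {c x : X}
    {ρ R : ℝ} (hx : x ∈ closedBall c ρ) : closedBall x R ⊆ closedBall c (ρ + R) :=
  closedBall_subset_closedBall' (by rw [mem_closedBall] at hx; linarith)

section CauchyEstimates

variable {E : Type*} [NormedAddCommGroup E] [NormedSpace ℂ E] {f : ℂ → E} {s : Set ℂ}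
  {c x y : ℂ} {ρ R M : ℝ}

theorem norm_deriv_le_of_closedBall_subset (hR : 0 < R) (hs : closedBall c (ρ + R) ⊆ s)
    (hf : DifferentiableOn ℂ f s) (hM : ∀ z ∈ s, ‖f z‖ ≤ M) (hx : x ∈ closedBall c ρ) :
    ‖deriv f x‖ ≤ M / R := by
  have hxs := (closedBall_subset_closedBall_add hx).trans hs
  exact Complex.norm_deriv_le_of_forall_mem_sphere_norm_le hR
    (hf.mono (closure_ball_subset_closedBall.trans hxs)).diffContOnCl
    fun z hz => hM z (hxs (sphere_subset_closedBall hz))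

theorem norm_sub_le_of_closedBall_subset (hR : 0 < R) (hs : closedBall c (ρ + R) ⊆ s)
    (hf : DifferentiableOn ℂ f s) (hM : ∀ z ∈ s, ‖f z‖ ≤ M) (hx : x ∈ closedBall c ρ)
    (hy : y ∈ closedBall c ρ) : ‖f x - f y‖ ≤ M / R * ‖x - y‖ := by
  have hdiff : ∀ z ∈ closedBall c ρ, DifferentiableAt ℂ f z := fun z hz =>
    hf.differentiableAt <| mem_of_superset (closedBall_mem_nhds z hR)
      ((closedBall_subset_closedBall_add hz).trans hs)
  exact (convex_closedBall c ρ).norm_image_sub_le_of_norm_deriv_le hdiff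
    (fun z hz => norm_deriv_le_of_closedBall_subset hR hs hf hM hz) hy hx

theorem norm_dslope_le_of_closedBall_subset (hR : 0 < R) (hs : closedBall c (ρ + R) ⊆ s)
    (hf : DifferentiableOn ℂ f s) (hM : ∀ z ∈ s, ‖f z‖ ≤ M) (hx : x ∈ closedBall c ρ)
    (hy : y ∈ closedBall c ρ) : ‖dslope f y x‖ ≤ M / R := by
  rcases eq_or_ne x y with rfl | hxy
  · rw [dslope_same]
    exact norm_deriv_le_of_closedBall_subset hR hs hf hM hx
  · rw [dslope_of_ne _ hxy, slope, norm_smul, norm_inv,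
      inv_mul_le_iff₀ (norm_pos_iff.mpr (sub_ne_zero.mpr hxy)), mul_comm]
    exact norm_sub_le_of_closedBall_subset hR hs hf hM hx hy

end CauchyEstimates

theorem exists_mem_closedBall_eq_zero_of_norm_lt {f : ℂ → ℂ} {c x : ℂ} {R M : ℝ}
    (hR : 0 < R) (hf : DifferentiableOn ℂ f (closedBall c R)) (hx : x ∈ closedBall c R)
    (hfx : ‖f x‖ < M) (hsphere : ∀ z ∈ sphere c R, M ≤ ‖f z‖) : ∃ z ∈ closedBall c R, f z = 0 := by
  by_contra! hne
  have hM : 0 < M := (norm_nonneg _).trans_lt hfx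
  have hinv : DiffContOnCl ℂ (fun z => (f z)⁻¹) (ball c R) :=
    ((hf.inv hne).mono closure_ball_subset_closedBall).diffContOnCl
  have hfrontier : ∀ z ∈ frontier (ball c R), ‖(f z)⁻¹‖ ≤ M⁻¹ := by
    rw [frontier_ball c hR.ne']
    intro z hz
    rw [norm_inv]
    exact inv_anti₀ hM (hsphere z hz)
  have := Complex.norm_le_of_forall_mem_frontier_norm_le isBounded_ball hinv hfrontier
    (by rwa [closure_ball c hR.ne'])
  rw [norm_inv, inv_le_inv₀ (norm_pos_iff.mpr (hne x hx)) hM] at this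
  linarith

theorem le_norm_dslope_of_le_norm_sub {𝕜 E : Type*} [NontriviallyNormedField 𝕜]
    [NormedAddCommGroup E] [NormedSpace 𝕜 E] {f : 𝕜 → E} {c x : 𝕜} {s : Set 𝕜} {C : ℝ}
    (hs : s ∈ 𝓝 c) (hf : DifferentiableAt 𝕜 f c) (hfs : ∀ z ∈ s, C * ‖z - c‖ ≤ ‖f z - f c‖)
    (hx : x ∈ s) : C ≤ ‖dslope f c x‖ := by
  have hne : ∀ z ∈ s, z ≠ c → C ≤ ‖dslope f c z‖ := fun z hz hzc => by
    rw [dslope_of_ne _ hzc, slope, norm_smul, norm_inv,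
      le_inv_mul_iff₀ (norm_pos_iff.mpr (sub_ne_zero.mpr hzc)), mul_comm]
    exact hfs z hz
  rcases eq_or_ne x c with rfl | hxc
  · refine ge_of_tendsto ((continuousAt_dslope_same.mpr hf).norm.tendsto.mono_left
      (nhdsWithin_le_nhds (s := {x}ᶜ))) ?_
    filter_upwards [nhdsWithin_le_nhds hs, self_mem_nhdsWithin] with z hz hzc
    exact hne z hz hzc
  · exact hne x hx hxc

theorem exists_fixedPoint_of_lipschitzOnWith {X : Type*} [MetricSpace X] [CompleteSpace X]
    {s : Set X} {T : X → X} {K : ℝ≥0} (hK : K < 1) (hs : IsClosed s) (hne : s.Nonempty)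
    (hmaps : MapsTo T s s) (hT : LipschitzOnWith K T s) : ∃ x ∈ s, T x = x := by
  obtain ⟨x, hx⟩ := hne
  obtain ⟨y, hy, hTy, -⟩ := ContractingWith.exists_fixedPoint' hs.isComplete hmaps
    ⟨hK, hT.mapsToRestrict hmaps⟩ hx (edist_ne_top _ _)
  exact ⟨y, hy, hTy⟩

def perturbedSquare (μ : ℂ) (a g : ℂ → ℂ) (z : ℂ) : ℂ :=
  (z - μ - a z) ^ 2 - g z

noncomputable def deflation (μ ξ : ℂ) (a g : ℂ → ℂ) (z : ℂ) : ℂ :=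
  (1 - dslope a ξ z) * (z - μ - a z + (ξ - μ - a ξ)) - dslope g ξ z

noncomputable def contractionMap (μ ξ : ℂ) (a g : ℂ → ℂ) (z : ℂ) : ℂ :=
  μ - (ξ - μ - a ξ) + a z + dslope g ξ z / (1 - dslope a ξ z)

section Deflation

variable {μ ξ : ℂ} {a g : ℂ → ℂ}

theorem perturbedSquare_eq_sub_mul_deflation (hξ : perturbedSquare μ a g ξ = 0) (z : ℂ) :
    perturbedSquare μ a g z = (z - ξ) * deflation μ ξ a g z := by
  have ha := sub_smul_dslope a ξ z
  have hg := sub_smul_dslope g ξ z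
  simp only [smul_eq_mul] at ha hg
  simp only [perturbedSquare, deflation] at hξ ⊢
  linear_combination (z - μ - a z + (ξ - μ - a ξ)) * ha + hg + hξ

theorem deflation_eq_mul_sub_contractionMap {z : ℂ} (hz : 1 - dslope a ξ z ≠ 0) :
    deflation μ ξ a g z = (1 - dslope a ξ z) * (z - contractionMap μ ξ a g z) := by
  simp only [deflation, contractionMap]
  field_simp
  ring

end Deflation

/-- The hypotheses of the theorem after the normalization `r = √n`, `μ = n²π²`, `g = b⁺b⁻`:
`S` is the strip and `V` an open set containing it. -/
structure PerturbedSquareBounds (V S : Set ℂ) (μ : ℂ) (r : ℝ) (a g : ℂ → ℂ) : Prop where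
  isOpen : IsOpen V
  subset : S ⊆ V
  differentiableOn_a : DifferentiableOn ℂ a V
  differentiableOn_g : DifferentiableOn ℂ g V
  one_le : 1 ≤ r
  closedBall_subset : closedBall μ (12 * r ^ 2) ⊆ S
  norm_a_le : ∀ z ∈ S, ‖a z‖ ≤ r / 2
  norm_g_le : ∀ z ∈ S, ‖g z‖ ≤ 3 * r ^ 2

namespace PerturbedSquareBounds

variable {V S : Set ℂ} {μ ξ x y z : ℂ} {r ρ : ℝ} {a g : ℂ → ℂ}

theorem closedBall_subset_of_le (H : PerturbedSquareBounds V S μ r a g)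
    (hρ : ρ ≤ 12 * r ^ 2) : closedBall μ ρ ⊆ S :=
  (closedBall_subset_closedBall hρ).trans H.closedBall_subset

theorem closedBall_subset_closedBall_six (H : PerturbedSquareBounds V S μ r a g)
    (hρ : ρ ≤ 4 * r) : closedBall μ ρ ⊆ closedBall μ (6 * r ^ 2) :=
  closedBall_subset_closedBall (by nlinarith [H.one_le])

theorem differentiableOn_perturbedSquare (H : PerturbedSquareBounds V S μ r a g) :
    DifferentiableOn ℂ (perturbedSquare μ a g) V :=
  (((differentiableOn_id.sub_const μ).sub H.differentiableOn_a).pow 2).sub H.differentiableOn_g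

theorem differentiableOn_deflation (H : PerturbedSquareBounds V S μ r a g) (hξ : ξ ∈ V) :
    DifferentiableOn ℂ (deflation μ ξ a g) V := by
  have hnhds : V ∈ 𝓝 ξ := H.isOpen.mem_nhds hξ
  have hda := (Complex.differentiableOn_dslope hnhds).mpr H.differentiableOn_a
  have hdg := (Complex.differentiableOn_dslope hnhds).mpr H.differentiableOn_g
  exact ((differentiableOn_const 1).sub hda).mul
    (((differentiableOn_id.sub_const μ).sub H.differentiableOn_a).add_const _) |>.sub hdg

theorem norm_sub_sub_le_of_eq_zero (H : PerturbedSquareBounds V S μ r a g) (hz : z ∈ S)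
    (h0 : perturbedSquare μ a g z = 0) : ‖z - μ - a z‖ ≤ 7 / 4 * r := by
  have hsq : ‖z - μ - a z‖ ^ 2 ≤ 3 * r ^ 2 := by
    rw [← norm_pow, sub_eq_zero.mp h0]
    exact H.norm_g_le z hz
  nlinarith [H.one_le, norm_nonneg (z - μ - a z)]

theorem mem_closedBall_of_eq_zero (H : PerturbedSquareBounds V S μ r a g) (hz : z ∈ S)
    (h0 : perturbedSquare μ a g z = 0) : z ∈ closedBall μ (9 / 4 * r) := by
  rw [mem_closedBall, dist_eq_norm]
  calc ‖z - μ‖ = ‖(z - μ - a z) + a z‖ := by ring_nf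
    _ ≤ ‖z - μ - a z‖ + ‖a z‖ := norm_add_le _ _
    _ ≤ 9 / 4 * r := by linarith [H.norm_sub_sub_le_of_eq_zero hz h0, H.norm_a_le z hz]

theorem mem_closedBall_six_of_eq_zero (H : PerturbedSquareBounds V S μ r a g) (hz : z ∈ S)
    (h0 : perturbedSquare μ a g z = 0) : z ∈ closedBall μ (6 * r ^ 2) :=
  H.closedBall_subset_closedBall_six (by linarith [H.one_le]) (H.mem_closedBall_of_eq_zero hz h0)

theorem exists_eq_zero (H : PerturbedSquareBounds V S μ r a g) :
    ∃ ξ ∈ S, perturbedSquare μ a g ξ = 0 := by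
  have hr := H.one_le
  have hball : closedBall μ (4 * r) ⊆ S := H.closedBall_subset_of_le (by nlinarith)
  have hcenter : ‖perturbedSquare μ a g μ‖ < 4 * r ^ 2 := by
    have ha := H.norm_a_le μ (hball (mem_closedBall_self (by positivity)))
    have hg := H.norm_g_le μ (hball (mem_closedBall_self (by positivity)))
    calc ‖perturbedSquare μ a g μ‖ = ‖(-a μ) ^ 2 - g μ‖ := by simp [perturbedSquare]
      _ ≤ ‖a μ‖ ^ 2 + ‖g μ‖ := by rw [← norm_neg (a μ), ← norm_pow]; exact norm_sub_le _ _
      _ < 4 * r ^ 2 := by nlinarith [norm_nonneg (a μ)]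
  have hsphere : ∀ z ∈ sphere μ (4 * r), 4 * r ^ 2 ≤ ‖perturbedSquare μ a g z‖ := by
    intro z hz
    have hzS := hball (sphere_subset_closedBall hz)
    rw [mem_sphere, dist_eq_norm] at hz
    have hf : 7 / 2 * r ≤ ‖z - μ - a z‖ := by
      linarith [norm_sub_norm_le (z - μ) (a z), H.norm_a_le z hzS]
    calc 4 * r ^ 2 ≤ ‖z - μ - a z‖ ^ 2 - ‖g z‖ := by nlinarith [H.norm_g_le z hzS]
      _ ≤ ‖perturbedSquare μ a g z‖ := by
          rw [← norm_pow]; exact norm_sub_norm_le _ _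
  obtain ⟨ξ, hξ, h0⟩ := exists_mem_closedBall_eq_zero_of_norm_lt (by positivity)
    (H.differentiableOn_perturbedSquare.mono (hball.trans H.subset))
    (mem_closedBall_self (by positivity)) hcenter hsphere
  exact ⟨ξ, hball hξ, h0⟩

theorem norm_dslope_a_le (H : PerturbedSquareBounds V S μ r a g)
    (hξ : ξ ∈ closedBall μ (6 * r ^ 2)) (hz : z ∈ closedBall μ (6 * r ^ 2)) :
    ‖dslope a ξ z‖ ≤ 1 / 12 := by
  have hr := H.one_le
  refine (norm_dslope_le_of_closedBall_subset (R := 6 * r ^ 2) (by positivity)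
    (H.closedBall_subset_of_le (by linarith)) (H.differentiableOn_a.mono H.subset)
    H.norm_a_le hz hξ).trans ?_
  rw [div_le_iff₀ (by positivity)]
  nlinarith

theorem norm_dslope_g_le (H : PerturbedSquareBounds V S μ r a g)
    (hξ : ξ ∈ closedBall μ (6 * r ^ 2)) (hz : z ∈ closedBall μ (6 * r ^ 2)) :
    ‖dslope g ξ z‖ ≤ 1 / 2 := by
  have hr := H.one_le
  refine (norm_dslope_le_of_closedBall_subset (R := 6 * r ^ 2) (by positivity)
    (H.closedBall_subset_of_le (by linarith)) (H.differentiableOn_g.mono H.subset)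
    H.norm_g_le hz hξ).trans ?_
  rw [div_le_iff₀ (by positivity)]
  nlinarith

theorem norm_sub_a_le (H : PerturbedSquareBounds V S μ r a g) (hx : x ∈ closedBall μ (4 * r))
    (hy : y ∈ closedBall μ (4 * r)) : ‖a x - a y‖ ≤ 1 / 16 * ‖x - y‖ := by
  have hr := H.one_le
  refine (norm_sub_le_of_closedBall_subset (R := 8 * r ^ 2) (by positivity)
    (H.closedBall_subset_of_le (by nlinarith)) (H.differentiableOn_a.mono H.subset)
    H.norm_a_le hx hy).trans (mul_le_mul_of_nonneg_right ?_ (norm_nonneg _))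
  rw [div_le_iff₀ (by positivity)]
  nlinarith

theorem le_norm_one_sub_dslope_a (H : PerturbedSquareBounds V S μ r a g)
    (hξ : ξ ∈ closedBall μ (6 * r ^ 2)) (hz : z ∈ closedBall μ (6 * r ^ 2)) :
    11 / 12 ≤ ‖1 - dslope a ξ z‖ := by
  linarith [norm_sub_norm_le (1 : ℂ) (dslope a ξ z), norm_one (α := ℂ),
    H.norm_dslope_a_le hξ hz]

theorem one_sub_dslope_a_ne_zero (H : PerturbedSquareBounds V S μ r a g)
    (hξ : ξ ∈ closedBall μ (6 * r ^ 2)) (hz : z ∈ closedBall μ (6 * r ^ 2)) :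
    1 - dslope a ξ z ≠ 0 :=
  norm_pos_iff.mp ((by norm_num : (0 : ℝ) < 11 / 12).trans_le (H.le_norm_one_sub_dslope_a hξ hz))

theorem norm_dslope_g_div_le (H : PerturbedSquareBounds V S μ r a g)
    (hξ : ξ ∈ closedBall μ (6 * r ^ 2)) (hz : z ∈ closedBall μ (6 * r ^ 2)) :
    ‖dslope g ξ z / (1 - dslope a ξ z)‖ ≤ 6 / 11 := by
  have hden := H.le_norm_one_sub_dslope_a hξ hz
  rw [norm_div, div_le_iff₀ (by linarith)]
  linarith [H.norm_dslope_g_le hξ hz]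

theorem lipschitzOnWith_contractionMap (H : PerturbedSquareBounds V S μ r a g)
    (hξ : ξ ∈ closedBall μ (6 * r ^ 2)) :
    LipschitzOnWith (1 / 2) (contractionMap μ ξ a g) (closedBall μ (4 * r)) := by
  have hr := H.one_le
  set q : ℂ → ℂ := fun z => dslope g ξ z / (1 - dslope a ξ z)
  have hξV : ξ ∈ V := H.subset (H.closedBall_subset_of_le (by nlinarith) hξ)
  have hnhds : V ∈ 𝓝 ξ := H.isOpen.mem_nhds hξV
  have hball : closedBall μ (6 * r ^ 2) ⊆ V :=
    (H.closedBall_subset_of_le (by nlinarith)).trans H.subset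
  have hq : DifferentiableOn ℂ q (closedBall μ (6 * r ^ 2)) :=
    (((Complex.differentiableOn_dslope hnhds).mpr H.differentiableOn_g).mono hball).div
      ((differentiableOn_const 1).sub
        (((Complex.differentiableOn_dslope hnhds).mpr H.differentiableOn_a).mono hball))
      fun z hz => H.one_sub_dslope_a_ne_zero hξ hz
  refine LipschitzOnWith.of_dist_le_mul fun x hx y hy => ?_
  have hqxy := norm_sub_le_of_closedBall_subset (R := 2 * r ^ 2) (by positivity)
    (closedBall_subset_closedBall (by nlinarith)) hq (fun _ => H.norm_dslope_g_div_le hξ) hx hy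
  have h311 : 6 / 11 / (2 * r ^ 2) ≤ 3 / 11 := by
    rw [div_le_iff₀ (by positivity)]; nlinarith
  have hT : contractionMap μ ξ a g x - contractionMap μ ξ a g y = (a x - a y) + (q x - q y) := by
    simp only [contractionMap, q]; ring
  rw [dist_eq_norm, dist_eq_norm, hT]
  calc ‖(a x - a y) + (q x - q y)‖ ≤ ‖a x - a y‖ + ‖q x - q y‖ := norm_add_le _ _
    _ ≤ 1 / 16 * ‖x - y‖ + 3 / 11 * ‖x - y‖ := by
        gcongr
        · exact H.norm_sub_a_le hx hy
        · exact hqxy.trans (mul_le_mul_of_nonneg_right h311 (norm_nonneg _))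
    _ ≤ ((1 / 2 : ℝ≥0) : ℝ) * ‖x - y‖ := by
        push_cast
        nlinarith [norm_nonneg (x - y)]

theorem mapsTo_contractionMap (H : PerturbedSquareBounds V S μ r a g) (hξ : ξ ∈ S)
    (h0 : perturbedSquare μ a g ξ = 0) :
    MapsTo (contractionMap μ ξ a g) (closedBall μ (4 * r)) (closedBall μ (4 * r)) := by
  have hr := H.one_le
  have hξ6 : ξ ∈ closedBall μ (6 * r ^ 2) :=
    H.mem_closedBall_six_of_eq_zero hξ h0
  intro z hz
  have hz6 : z ∈ closedBall μ (6 * r ^ 2) := H.closedBall_subset_closedBall_six le_rfl hz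
  have hzS : z ∈ S := H.closedBall_subset_of_le (by nlinarith) hz6
  rw [mem_closedBall, dist_eq_norm]
  calc ‖contractionMap μ ξ a g z - μ‖
      = ‖-(ξ - μ - a ξ) + a z + dslope g ξ z / (1 - dslope a ξ z)‖ := by
        simp only [contractionMap]; ring_nf
    _ ≤ ‖ξ - μ - a ξ‖ + ‖a z‖ + ‖dslope g ξ z / (1 - dslope a ξ z)‖ := by
        rw [← norm_neg (ξ - μ - a ξ)]; exact norm_add₃_le
    _ ≤ 7 / 4 * r + r / 2 + 6 / 11 := by
        gcongr
        exacts [H.norm_sub_sub_le_of_eq_zero hξ h0, H.norm_a_le z hzS,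
          H.norm_dslope_g_div_le hξ6 hz6]
    _ ≤ 4 * r := by linarith

theorem exists_fixedPoint_contractionMap (H : PerturbedSquareBounds V S μ r a g) (hξ : ξ ∈ S)
    (h0 : perturbedSquare μ a g ξ = 0) :
    ∃ ζ ∈ closedBall μ (4 * r), contractionMap μ ξ a g ζ = ζ := by
  have hr := H.one_le
  exact exists_fixedPoint_of_lipschitzOnWith (by norm_num) isClosed_closedBall
    ⟨μ, mem_closedBall_self (by positivity)⟩ (H.mapsTo_contractionMap hξ h0)
    (H.lipschitzOnWith_contractionMap
      (H.mem_closedBall_six_of_eq_zero hξ h0))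

theorem le_norm_deflation (H : PerturbedSquareBounds V S μ r a g) (hξ : ξ ∈ S)
    (h0 : perturbedSquare μ a g ξ = 0) {ζ : ℂ} (hζ : ζ ∈ closedBall μ (4 * r))
    (hTζ : contractionMap μ ξ a g ζ = ζ) (hz : z ∈ closedBall μ (4 * r)) :
    11 / 24 * ‖z - ζ‖ ≤ ‖deflation μ ξ a g z‖ := by
  have hξ6 : ξ ∈ closedBall μ (6 * r ^ 2) :=
    H.mem_closedBall_six_of_eq_zero hξ h0
  have hz6 : z ∈ closedBall μ (6 * r ^ 2) := H.closedBall_subset_closedBall_six le_rfl hz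
  have hden := H.le_norm_one_sub_dslope_a hξ6 hz6
  have hT : dist (contractionMap μ ξ a g z) (contractionMap μ ξ a g ζ) ≤ 1 / 2 * dist z ζ := by
    exact_mod_cast (H.lipschitzOnWith_contractionMap hξ6).dist_le_mul z hz ζ hζ
  rw [hTζ, dist_eq_norm, dist_eq_norm] at hT
  have hmove : 1 / 2 * ‖z - ζ‖ ≤ ‖z - contractionMap μ ξ a g z‖ := by
    have := norm_sub_norm_le (z - ζ) (contractionMap μ ξ a g z - ζ)
    rw [sub_sub_sub_cancel_right] at this
    linarith
  rw [deflation_eq_mul_sub_contractionMap (H.one_sub_dslope_a_ne_zero hξ6 hz6), norm_mul]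
  calc 11 / 24 * ‖z - ζ‖ = 11 / 12 * (1 / 2 * ‖z - ζ‖) := by ring
    _ ≤ _ := mul_le_mul hden hmove (by positivity) (norm_nonneg _)

theorem exists_factorization (H : PerturbedSquareBounds V S μ r a g) :
    ∃ ξ₁ ξ₂ : ℂ, ∃ h : ℂ → ℂ, ξ₁ ∈ closedBall μ (4 * r) ∧ ξ₂ ∈ closedBall μ (4 * r) ∧
      DifferentiableOn ℂ h V ∧ (∀ z ∈ S, h z ≠ 0) ∧
      ∀ z, perturbedSquare μ a g z = (z - ξ₁) * (z - ξ₂) * h z := by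
  have hr := H.one_le
  have hzero : ∀ z ∈ S, perturbedSquare μ a g z = 0 → z ∈ ball μ (4 * r) := fun z hz h0 =>
    closedBall_subset_ball (by linarith) (H.mem_closedBall_of_eq_zero hz h0)
  obtain ⟨ξ₁, hξ₁, h₁⟩ := H.exists_eq_zero
  obtain ⟨ξ₂, hξ₂, hTξ₂⟩ := H.exists_fixedPoint_contractionMap hξ₁ h₁
  have hχ₁ξ₂ : deflation μ ξ₁ a g ξ₂ = 0 := by
    rw [deflation_eq_mul_sub_contractionMap (H.one_sub_dslope_a_ne_zero
      (H.mem_closedBall_six_of_eq_zero hξ₁ h₁)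
      (H.closedBall_subset_closedBall_six le_rfl hξ₂)), hTξ₂, sub_self, mul_zero]
  set χ₁ := deflation μ ξ₁ a g
  have hfac : ∀ z, perturbedSquare μ a g z = (z - ξ₁) * (z - ξ₂) * dslope χ₁ ξ₂ z := fun z => by
    rw [perturbedSquare_eq_sub_mul_deflation h₁, mul_assoc, ← smul_eq_mul (z - ξ₂),
      sub_smul_dslope_of_zero hχ₁ξ₂]
  have hξ₂S : ξ₂ ∈ S := H.closedBall_subset_of_le (by nlinarith) hξ₂
  have hξ₂V : V ∈ 𝓝 ξ₂ := H.isOpen.mem_nhds (H.subset hξ₂S)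
  have hdχ₁ := H.differentiableOn_deflation (H.subset hξ₁)
  have hlow : ∀ z ∈ ball μ (4 * r), 11 / 24 ≤ ‖dslope χ₁ ξ₂ z‖ :=
    fun _ => le_norm_dslope_of_le_norm_sub
      (isOpen_ball.mem_nhds (hzero ξ₂ hξ₂S (by simp [hfac])))
      (hdχ₁.differentiableAt hξ₂V)
      (fun z hz => by
        simpa [hχ₁ξ₂] using H.le_norm_deflation hξ₁ h₁ hξ₂ hTξ₂ (ball_subset_closedBall hz))
  refine ⟨ξ₁, ξ₂, dslope χ₁ ξ₂, ball_subset_closedBall (hzero ξ₁ hξ₁ h₁), hξ₂,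
    (Complex.differentiableOn_dslope hξ₂V).mpr hdχ₁, fun z hz hz0 => ?_, hfac⟩
  have := hlow z (hzero z hz (by simp [hfac, hz0]))
  rw [hz0, norm_zero] at this
  norm_num at this

theorem norm_sub_le_of_eq_zero (H : PerturbedSquareBounds V S μ r a g) {ξ₁ ξ₂ : ℂ}
    (hξ₁ : ξ₁ ∈ closedBall μ (4 * r)) (hξ₂ : ξ₂ ∈ closedBall μ (4 * r))
    (h₁ : perturbedSquare μ a g ξ₁ = 0) (h₂ : perturbedSquare μ a g ξ₂ = 0) {B : ℝ}
    (hB : ∀ z ∈ S, √‖g z‖ ≤ B) : ‖ξ₁ - ξ₂‖ ≤ √6 * B := by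
  have hr := H.one_le
  have hball : closedBall μ (4 * r) ⊆ S := H.closedBall_subset_of_le (by nlinarith)
  have hroot : ∀ ξ ∈ closedBall μ (4 * r), perturbedSquare μ a g ξ = 0 → ‖ξ - μ - a ξ‖ ≤ B :=
    fun ξ hξ h0 => calc
      ‖ξ - μ - a ξ‖ = √‖g ξ‖ := by
        rw [← sub_eq_zero.mp h0, norm_pow, Real.sqrt_sq (norm_nonneg _)]
      _ ≤ B := hB ξ (hball hξ)
  have hB0 : 0 ≤ B := (norm_nonneg _).trans (hroot ξ₁ hξ₁ h₁)
  have hsqrt6 : 32 / 15 ≤ √6 := Real.le_sqrt_of_sq_le (by norm_num)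
  have hsplit : ‖ξ₁ - ξ₂‖ ≤ 2 * B + 1 / 16 * ‖ξ₁ - ξ₂‖ :=
    calc ‖ξ₁ - ξ₂‖ = ‖(ξ₁ - μ - a ξ₁) - (ξ₂ - μ - a ξ₂) + (a ξ₁ - a ξ₂)‖ := by ring_nf
      _ ≤ ‖ξ₁ - μ - a ξ₁‖ + ‖ξ₂ - μ - a ξ₂‖ + ‖a ξ₁ - a ξ₂‖ :=
        (norm_add_le _ _).trans (by gcongr; exact norm_sub_le _ _)
      _ ≤ 2 * B + 1 / 16 * ‖ξ₁ - ξ₂‖ := by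
        linarith [hroot ξ₁ hξ₁ h₁, hroot ξ₂ hξ₂ h₂, H.norm_sub_a_le hξ₁ hξ₂]
  nlinarith

end PerturbedSquareBounds

theorem closedBall_subset_strip (n : ℕ) :
    closedBall ((n : ℂ) ^ 2 * (Real.pi : ℂ) ^ 2) (12 * n) ⊆ strip n := by
  intro z hz
  rw [mem_closedBall, dist_eq_norm] at hz
  have hre : (z - (n : ℂ) ^ 2 * (Real.pi : ℂ) ^ 2).re = z.re - (n : ℝ) ^ 2 * Real.pi ^ 2 := by
    norm_cast
  simpa [strip, hre] using (Complex.abs_re_le_norm _).trans hz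

theorem le_sqrt_three_mul_sqrt_of_rpow_mul_le {s N x : ℝ} (hs₁ : -(1 / 2) ≤ s) (hs₂ : s ≤ 0)
    (hN : 1 ≤ N) (hx : (1 + 2 * N) ^ s * x ≤ N ^ ((1 : ℝ) / 2 - |s|)) : x ≤ √3 * √N := by
  have hN0 : 0 < N := by linarith
  have hpos : 0 < 1 + 2 * N := by linarith
  rw [abs_of_nonpos hs₂] at hx
  calc x ≤ N ^ ((1 : ℝ) / 2 + s) * (1 + 2 * N) ^ (-s) := by
        rw [Real.rpow_neg hpos.le, ← div_eq_mul_inv, le_div_iff₀ (Real.rpow_pos_of_pos hpos s),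
          mul_comm]
        simpa [sub_neg_eq_add] using hx
    _ ≤ N ^ ((1 : ℝ) / 2 + s) * (3 ^ ((1 : ℝ) / 2) * N ^ (-s)) := by
        gcongr
        calc (1 + 2 * N) ^ (-s) ≤ (3 * N) ^ (-s) := by gcongr <;> linarith
          _ = 3 ^ (-s) * N ^ (-s) := Real.mul_rpow (by norm_num) hN0.le
          _ ≤ 3 ^ ((1 : ℝ) / 2) * N ^ (-s) := by
              gcongr
              · norm_num
              · linarith
    _ = 3 ^ ((1 : ℝ) / 2) * N ^ ((1 : ℝ) / 2) := by
        rw [mul_left_comm, ← Real.rpow_add hN0]; ring_nf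
    _ = √3 * √N := by rw [Real.sqrt_eq_rpow, Real.sqrt_eq_rpow]

theorem perturbedSquareBounds_strip {s K : ℝ} {n : ℕ} {V : Set ℂ} {a bp bm : ℂ → ℂ}
    (hs₁ : -(1 / 2) ≤ s) (hs₂ : s ≤ 0) (hn : 1 ≤ n)
    (hKn : 2 * K ≤ (n : ℝ) ^ ((1 : ℝ) / 2 - |s|)) (hV : IsOpen V) (hSV : strip n ⊆ V)
    (ha : DifferentiableOn ℂ a V) (hbp : DifferentiableOn ℂ bp V)
    (hbm : DifferentiableOn ℂ bm V) (haK : ∀ z ∈ strip n, ‖a z‖ ≤ K)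
    (hbpK : ∀ z ∈ strip n, (1 + 2 * (n : ℝ)) ^ s * ‖bp z‖ ≤ 2 * K)
    (hbmK : ∀ z ∈ strip n, (1 + 2 * (n : ℝ)) ^ s * ‖bm z‖ ≤ 2 * K) :
    PerturbedSquareBounds V (strip n) ((n : ℂ) ^ 2 * (Real.pi : ℂ) ^ 2) √(n : ℝ) a
      (fun z => bp z * bm z) := by
  have hn' : (1 : ℝ) ≤ n := by exact_mod_cast hn
  have hKr : 2 * K ≤ √(n : ℝ) := hKn.trans <| (Real.sqrt_eq_rpow _).symm ▸
    Real.rpow_le_rpow_of_exponent_le hn' (by linarith [abs_nonneg s])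
  have hb : ∀ b : ℂ → ℂ, (∀ z ∈ strip n, (1 + 2 * (n : ℝ)) ^ s * ‖b z‖ ≤ 2 * K) →
      ∀ z ∈ strip n, ‖b z‖ ≤ √3 * √(n : ℝ) := fun b hbK z hz =>
    le_sqrt_three_mul_sqrt_of_rpow_mul_le hs₁ hs₂ hn' ((hbK z hz).trans hKn)
  exact
    { isOpen := hV
      subset := hSV
      differentiableOn_a := ha
      differentiableOn_g := hbp.mul hbm
      one_le := Real.one_le_sqrt.mpr hn'
      closedBall_subset := by
        rw [Real.sq_sqrt (Nat.cast_nonneg n)]; exact closedBall_subset_strip n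
      norm_a_le := fun z hz => by linarith [haK z hz]
      norm_g_le := fun z hz => calc
        ‖bp z * bm z‖ ≤ (√3 * √(n : ℝ)) * (√3 * √(n : ℝ)) := by
          rw [norm_mul]
          exact mul_le_mul (hb bp hbpK z hz) (hb bm hbmK z hz) (norm_nonneg _) (by positivity)
        _ = 3 * √(n : ℝ) ^ 2 := by
          rw [mul_mul_mul_comm, Real.mul_self_sqrt (by norm_num), sq] }

theorem stmt_18_general (s : ℝ) (hs₁ : -(1 / 2) < s) (hs₂ : s ≤ 0) (n : ℕ) (hn : 1 ≤ n)
    (K : ℝ) (hKn : 2 * K ≤ (n : ℝ) ^ ((1 : ℝ) / 2 - |s|))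
    (V : Set ℂ) (hV : IsOpen V) (hSV : strip n ⊆ V)
    (a bp bm : ℂ → ℂ)
    (ha : AnalyticOnNhd ℂ a V) (hbp : AnalyticOnNhd ℂ bp V) (hbm : AnalyticOnNhd ℂ bm V)
    (haK : ∀ lam ∈ strip n, ‖a lam‖ ≤ K)
    (hbpK : ∀ lam ∈ strip n, (1 + 2 * (n : ℝ)) ^ s * ‖bp lam‖ ≤ 2 * K)
    (hbmK : ∀ lam ∈ strip n, (1 + 2 * (n : ℝ)) ^ s * ‖bm lam‖ ≤ 2 * K) :
    ∃ ξ₁ ξ₂ : ℂ,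
      ξ₁ ∈ Metric.closedBall ((n : ℂ) ^ 2 * (Real.pi : ℂ) ^ 2) (4 * (n : ℝ) ^ ((1 : ℝ) / 2)) ∧
      ξ₂ ∈ Metric.closedBall ((n : ℂ) ^ 2 * (Real.pi : ℂ) ^ 2) (4 * (n : ℝ) ^ ((1 : ℝ) / 2)) ∧
      (∃ W : Set ℂ, IsOpen W ∧ strip n ⊆ W ∧ W ⊆ V ∧
        ∃ h : ℂ → ℂ, AnalyticOnNhd ℂ h W ∧ (∀ lam ∈ W, h lam ≠ 0) ∧
          ∀ lam ∈ W,
            (lam - (n : ℂ) ^ 2 * (Real.pi : ℂ) ^ 2 - a lam) ^ 2 - bp lam * bm lam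
              = (lam - ξ₁) * (lam - ξ₂) * h lam) ∧
      ∀ B : ℝ, (∀ lam ∈ strip n, Real.sqrt (‖bp lam * bm lam‖) ≤ B) →
        ‖ξ₁ - ξ₂‖ ≤ Real.sqrt 6 * B := by
  have H := perturbedSquareBounds_strip hs₁.le hs₂ hn hKn hV hSV ha.differentiableOn
    hbp.differentiableOn hbm.differentiableOn haK hbpK hbmK
  obtain ⟨ξ₁, ξ₂, h, hξ₁, hξ₂, hh, hne, hfac⟩ := H.exists_factorization
  rw [← Real.sqrt_eq_rpow]
  refine ⟨ξ₁, ξ₂, hξ₁, hξ₂, ⟨V ∩ h ⁻¹' {0}ᶜ,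
    hh.continuousOn.isOpen_inter_preimage hV isOpen_compl_singleton,
    fun z hz => ⟨hSV hz, hne z hz⟩, inter_subset_left, h,
    (hh.analyticOnNhd hV).mono inter_subset_left, fun z hz => hz.2, fun z _ => hfac z⟩,
    fun B hB => H.norm_sub_le_of_eq_zero hξ₁ hξ₂ (by simp [hfac]) (by simp [hfac]) hB⟩

/-- Rouché-type lemma: under the stated bounds on the analytic functions `a, b⁺, b⁻` on the
strip `S_n`, the function `χ(λ) = (λ − n²π² − a(λ))² − b⁺(λ)b⁻(λ)` has exactly two zeros in
`S_n` counted with multiplicity (expressed by a factorization `χ = (λ−ξ₁)(λ−ξ₂)h` with `h`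
analytic and nonvanishing on a neighborhood of `S_n`); both zeros lie in the disc
`D_n = {|λ − n²π²| ≤ 4√n}` and `|ξ₁ − ξ₂| ≤ √6 · sup_{λ∈S_n} |b⁺(λ)b⁻(λ)|^{1/2}`. -/
theorem stmt_18 (s : ℝ) (hs₁ : -(1 / 2) < s) (hs₂ : s ≤ 0) (n : ℕ) (hn : 1 ≤ n)
    (K : ℝ) (hK : 0 < K) (hKn : 2 * K ≤ (n : ℝ) ^ ((1 : ℝ) / 2 - |s|))
    (V : Set ℂ) (hV : IsOpen V) (hSV : strip n ⊆ V)
    (a bp bm : ℂ → ℂ)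
    (ha : AnalyticOnNhd ℂ a V) (hbp : AnalyticOnNhd ℂ bp V) (hbm : AnalyticOnNhd ℂ bm V)
    (haK : ∀ lam ∈ strip n, ‖a lam‖ ≤ K)
    (hbpK : ∀ lam ∈ strip n, (1 + 2 * (n : ℝ)) ^ s * ‖bp lam‖ ≤ 2 * K)
    (hbmK : ∀ lam ∈ strip n, (1 + 2 * (n : ℝ)) ^ s * ‖bm lam‖ ≤ 2 * K) :
    ∃ ξ₁ ξ₂ : ℂ,
      ξ₁ ∈ Metric.closedBall ((n : ℂ) ^ 2 * (Real.pi : ℂ) ^ 2) (4 * (n : ℝ) ^ ((1 : ℝ) / 2)) ∧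
      ξ₂ ∈ Metric.closedBall ((n : ℂ) ^ 2 * (Real.pi : ℂ) ^ 2) (4 * (n : ℝ) ^ ((1 : ℝ) / 2)) ∧
      (∃ W : Set ℂ, IsOpen W ∧ strip n ⊆ W ∧ W ⊆ V ∧
        ∃ h : ℂ → ℂ, AnalyticOnNhd ℂ h W ∧ (∀ lam ∈ W, h lam ≠ 0) ∧
          ∀ lam ∈ W,
            (lam - (n : ℂ) ^ 2 * (Real.pi : ℂ) ^ 2 - a lam) ^ 2 - bp lam * bm lam
              = (lam - ξ₁) * (lam - ξ₂) * h lam) ∧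
      ∀ B : ℝ, (∀ lam ∈ strip n, Real.sqrt (‖bp lam * bm lam‖) ≤ B) →
        ‖ξ₁ - ξ₂‖ ≤ Real.sqrt 6 * B :=
  stmt_18_general s hs₁ hs₂ n hn K hKn V hV hSV a bp bm ha hbp hbm haK hbpK hbmK
end

section
/- Let X be a complex Banach space, U ⊆ X a nonempty open set, n ≥ 1 an integer, and ρ > 0 with ρ ≤ 2 n^{1/2}. Let Ω ⊆ ℂ be an open set containing the strip S_n = {λ ∈ ℂ : |Re λ − n²π²| ≤ 12n} and let a : Ω × U → ℂ be analytic with |a(λ, q)| ≤ ρ for all (λ, q) ∈ S_n × U. Then there exists a unique analytic map α : U → ℂ with |α(q) − n²π²| ≤ ρ for all q ∈ U such that α(q) = n²π² + a(α(q), q) for all q ∈ U. -/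
open Filter Function Metric Set Topology
open scoped NNReal ContDiff

section FixedPoint

variable {α : Type*} [MetricSpace α] {f : α → α} {s : Set α} {K : ℝ≥0}

theorem LipschitzOnWith.exists_isFixedPt (hf : LipschitzOnWith K f s) (hK : K < 1)
    (hs : IsComplete s) (hsf : MapsTo f s s) (hne : s.Nonempty) : ∃ x ∈ s, IsFixedPt f x := by
  obtain ⟨x, hx⟩ := hne
  obtain ⟨y, hys, hy, -⟩ := ContractingWith.exists_fixedPoint' hs hsf
    ⟨hK, hf.mapsToRestrict hsf⟩ hx (edist_ne_top _ _)
  exact ⟨y, hys, hy⟩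

theorem LipschitzOnWith.eq_of_isFixedPt (hf : LipschitzOnWith K f s) (hK : K < 1) {x y : α}
    (hx : x ∈ s) (hy : y ∈ s) (hfx : IsFixedPt f x) (hfy : IsFixedPt f y) : x = y := by
  have h := hf.dist_le_mul x hx y hy
  rw [hfx.eq, hfy.eq] at h
  have hK' : (K : ℝ) < 1 := hK
  exact dist_le_zero.mp (by nlinarith [dist_nonneg (x := x) (y := y)])

end FixedPoint

section CauchyEstimate

variable {E : Type*} [NormedAddCommGroup E] [NormedSpace ℂ E] {f : ℂ → E} {c z : ℂ} {b : E}
  {r R M : ℝ}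

theorem Complex.norm_deriv_le_of_mapsTo_ball (hf : DifferentiableOn ℂ f (ball c R))
    (hmaps : MapsTo f (ball c R) (closedBall b M)) (hrR : r < R) (hz : z ∈ closedBall c r) :
    ‖deriv f z‖ ≤ 2 * M / (R - r) := by
  have hsub : ball z (R - r) ⊆ ball c R :=
    ball_subset_ball' (by rw [mem_closedBall] at hz; linarith)
  refine Complex.norm_deriv_le_div_of_mapsTo_ball (hf.mono hsub) (fun w hw => ?_) (by linarith)
  have hfz := hmaps (hsub (mem_ball_self (by linarith)))
  rw [mem_closedBall] at hfz ⊢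
  calc dist (f w) (f z) ≤ dist (f w) b + dist (f z) b := dist_triangle_right _ _ _
    _ ≤ 2 * M := by linarith [mem_closedBall.mp (hmaps (hsub hw))]

theorem Complex.lipschitzOnWith_closedBall_of_mapsTo_ball (hf : DifferentiableOn ℂ f (ball c R))
    (hmaps : MapsTo f (ball c R) (closedBall b M)) (hrR : r < R) :
    LipschitzOnWith (2 * M / (R - r)).toNNReal f (closedBall c r) :=
  (convex_closedBall c r).lipschitzOnWith_of_nnnorm_deriv_le
    (fun _ hz => hf.differentiableAt (isOpen_ball.mem_nhds (closedBall_subset_ball hrR hz)))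
    (fun _ hz => by
      rw [← Real.toNNReal_coe (r := ‖_‖₊), coe_nnnorm]
      exact Real.toNNReal_le_toNNReal (Complex.norm_deriv_le_of_mapsTo_ball hf hmaps hrR hz))

end CauchyEstimate

theorem ContinuousLinearMap.isInvertible_of_apply_one_ne_zero {𝕜 : Type*}
    [NontriviallyNormedField 𝕜] {L : 𝕜 →L[𝕜] 𝕜} (h : L 1 ≠ 0) : L.IsInvertible := by
  refine .of_inverse (g := (L 1)⁻¹ • .id 𝕜 𝕜) (ext_ring ?_) (ext_ring ?_)
  · rw [comp_apply, smul_apply, id_apply, map_smul, smul_eq_mul, inv_mul_cancel₀ h]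
  · simp [h]

section ImplicitFunction

variable {𝕜 : Type*} [RCLike 𝕜] {X : Type*} [NormedAddCommGroup X] [NormedSpace 𝕜 X]
  [CompleteSpace X]

theorem AnalyticAt.exists_analyticAt_fixedPoint {g : 𝕜 × X → 𝕜} {w₀ d : 𝕜} {q₀ : X}
    (hg : AnalyticAt 𝕜 g (w₀, q₀)) (hfix : g (w₀, q₀) = w₀)
    (hd : HasDerivAt (fun w => g (w, q₀)) d w₀) (hd1 : d ≠ 1) :
    ∃ φ : X → 𝕜, AnalyticAt 𝕜 φ q₀ ∧ φ q₀ = w₀ ∧ ∀ᶠ q in 𝓝 q₀, g (φ q, q) = φ q := by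
  let F : X × 𝕜 → 𝕜 := fun p => p.2 - g (p.2, p.1)
  have hFan : AnalyticAt 𝕜 F (q₀, w₀) :=
    analyticAt_snd.sub
      (hg.comp (f := fun p : X × 𝕜 => (p.2, p.1)) (analyticAt_snd.prod analyticAt_fst))
  have hFd : HasDerivAt (fun w => F (q₀, w)) (1 - d) w₀ := (hasDerivAt_id w₀).sub hd
  have hpartial : (fderiv 𝕜 F (q₀, w₀) ∘L .inr 𝕜 X 𝕜) 1 = 1 - d :=
    (hFan.differentiableAt.hasFDerivAt.comp w₀ (hasFDerivAt_prodMk_right q₀ w₀)).hasDerivAt.unique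
      hFd
  have hinv : (fderiv 𝕜 F (q₀, w₀) ∘L .inr 𝕜 X 𝕜).IsInvertible :=
    ContinuousLinearMap.isInvertible_of_apply_one_ne_zero
      (by rw [hpartial]; exact sub_ne_zero.mpr hd1.symm)
  have hcd : ContDiffAt 𝕜 ω F (q₀, w₀) := hFan.contDiffAt
  refine ⟨hcd.implicitFunction (by simp) hinv, (hcd.contDiffAt_implicitFunction _ hinv).analyticAt,
    hcd.implicitFunction_apply_self _ hinv, ?_⟩
  filter_upwards [hcd.eventually_apply_implicitFunction (by simp) hinv] with q hq
  have hF₀ : F (q₀, w₀) = 0 := sub_eq_zero.mpr hfix.symm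
  rw [hF₀] at hq
  exact (sub_eq_zero.mp hq).symm

end ImplicitFunction

theorem AnalyticOnNhd.differentiableOn_slice {𝕜 E F : Type*} [NontriviallyNormedField 𝕜]
    [NormedAddCommGroup E] [NormedSpace 𝕜 E] [NormedAddCommGroup F] [NormedSpace 𝕜 F]
    {g : 𝕜 × E → F} {s : Set 𝕜} {U : Set E} {q : E} (hg : AnalyticOnNhd 𝕜 g (s ×ˢ U))
    (hq : q ∈ U) : DifferentiableOn 𝕜 (fun w => g (w, q)) s := fun w hw =>
  ((hg (w, q) ⟨hw, hq⟩).comp (f := fun w : 𝕜 => (w, q))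
    (analyticAt_id.prod analyticAt_const)).differentiableAt.differentiableWithinAt

section AnalyticFixedPoint

variable {X : Type*} [NormedAddCommGroup X] [NormedSpace ℂ X] {U : Set X} {g : ℂ × X → ℂ}
  {c : ℂ} {r R : ℝ}

theorem analyticOnNhd_of_isFixedPt_unique [CompleteSpace X] (hU : IsOpen U) (hrR : 3 * r < R)
    (hg : AnalyticOnNhd ℂ g (ball c R ×ˢ U))
    (hmaps : ∀ q ∈ U, MapsTo (fun w => g (w, q)) (ball c R) (closedBall c r)) {α : X → ℂ}
    (hα : ∀ q ∈ U, α q ∈ closedBall c r ∧ g (α q, q) = α q)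
    (huniq : ∀ q ∈ U, ∀ w ∈ closedBall c r, g (w, q) = w → w = α q) :
    AnalyticOnNhd ℂ α U := by
  intro q₀ hq₀
  obtain ⟨hmem₀, hfix₀⟩ := hα q₀ hq₀
  have hr : 0 ≤ r := dist_nonneg.trans hmem₀
  have hball : α q₀ ∈ ball c R := closedBall_subset_ball (by linarith) hmem₀
  have hdiff := hg.differentiableOn_slice hq₀
  have hd1 : deriv (fun w => g (w, q₀)) (α q₀) ≠ 1 := by
    intro h
    have := Complex.norm_deriv_le_of_mapsTo_ball hdiff (hmaps q₀ hq₀) (by linarith) hmem₀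
    rw [h, norm_one, le_div_iff₀ (by linarith)] at this
    linarith
  obtain ⟨φ, hφ, hφ₀, hφfix⟩ := (hg _ ⟨hball, hq₀⟩).exists_analyticAt_fixedPoint hfix₀
    (hdiff.differentiableAt (isOpen_ball.mem_nhds hball)).hasDerivAt hd1
  have hφball : ∀ᶠ q in 𝓝 q₀, φ q ∈ ball c R :=
    hφ.continuousAt.preimage_mem_nhds (hφ₀ ▸ isOpen_ball.mem_nhds hball)
  refine hφ.congr ?_
  filter_upwards [hU.mem_nhds hq₀, hφball, hφfix] with q hq hqball hqfix
  exact huniq q hq _ (hqfix ▸ hmaps q hq hqball) hqfix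

theorem exists_unique_analyticOnNhd_isFixedPt [CompleteSpace X] (hU : IsOpen U) (hr : 0 ≤ r)
    (hrR : 3 * r < R) (hg : AnalyticOnNhd ℂ g (ball c R ×ˢ U))
    (hmaps : ∀ q ∈ U, MapsTo (fun w => g (w, q)) (ball c R) (closedBall c r)) :
    ∃ α : X → ℂ, AnalyticOnNhd ℂ α U ∧ (∀ q ∈ U, α q ∈ closedBall c r ∧ g (α q, q) = α q) ∧
      ∀ q ∈ U, ∀ w ∈ closedBall c r, g (w, q) = w → w = α q := by
  have hK : (2 * r / (R - r)).toNNReal < 1 :=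
    Real.toNNReal_lt_one.mpr ((div_lt_one (by linarith)).mpr (by linarith))
  have hlip : ∀ q ∈ U, LipschitzOnWith (2 * r / (R - r)).toNNReal (fun w => g (w, q))
      (closedBall c r) := fun q hq =>
    Complex.lipschitzOnWith_closedBall_of_mapsTo_ball (hg.differentiableOn_slice hq)
      (hmaps q hq) (by linarith)
  have hself : ∀ q ∈ U, MapsTo (fun w => g (w, q)) (closedBall c r) (closedBall c r) :=
    fun q hq => (hmaps q hq).mono_left (closedBall_subset_ball (by linarith))
  choose! α hαmem hαfix using fun q hq => (hlip q hq).exists_isFixedPt hK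
    isClosed_closedBall.isComplete (hself q hq) (nonempty_closedBall.mpr hr)
  have hα : ∀ q ∈ U, α q ∈ closedBall c r ∧ g (α q, q) = α q :=
    fun q hq => ⟨hαmem q hq, hαfix q hq⟩
  have huniq : ∀ q ∈ U, ∀ w ∈ closedBall c r, g (w, q) = w → w = α q :=
    fun q hq w hw hfix => (hlip q hq).eq_of_isFixedPt hK hw (hαmem q hq) hfix (hαfix q hq)
  exact ⟨α, analyticOnNhd_of_isFixedPt_unique hU hrR hg hmaps hα huniq, hα, huniq⟩

end AnalyticFixedPoint

theorem ball_subset_strip (n : ℕ) :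
    ball ((n : ℂ) ^ 2 * (Real.pi : ℂ) ^ 2) (12 * n) ⊆ strip n := by
  intro z hz
  have hc : (n : ℂ) ^ 2 * (Real.pi : ℂ) ^ 2 = ((n ^ 2 * Real.pi ^ 2 : ℝ) : ℂ) := by push_cast; rfl
  rw [hc, mem_ball, Complex.dist_eq] at hz
  have hre := Complex.abs_re_le_norm (z - ((n ^ 2 * Real.pi ^ 2 : ℝ) : ℂ))
  rw [Complex.sub_re, Complex.ofReal_re] at hre
  exact hre.trans hz.le

theorem stmt_19_general (X : Type*) [NormedAddCommGroup X] [NormedSpace ℂ X] [CompleteSpace X]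
    (U : Set X) (hU : IsOpen U)
    (n : ℕ) (hn : 1 ≤ n) (ρ : ℝ) (hρ : 0 < ρ) (hρn : ρ ≤ 2 * (n : ℝ) ^ ((1 : ℝ) / 2))
    (Ω : Set ℂ) (hSΩ : strip n ⊆ Ω)
    (a : ℂ × X → ℂ) (ha : AnalyticOnNhd ℂ a (Ω ×ˢ U))
    (hbound : ∀ lam ∈ strip n, ∀ q ∈ U, ‖a (lam, q)‖ ≤ ρ) :
    ∃ α : X → ℂ, AnalyticOnNhd ℂ α U ∧
      (∀ q ∈ U, ‖α q - (n : ℂ) ^ 2 * (Real.pi : ℂ) ^ 2‖ ≤ ρ) ∧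
      (∀ q ∈ U, α q = (n : ℂ) ^ 2 * (Real.pi : ℂ) ^ 2 + a (α q, q)) ∧
      ∀ β : X → ℂ, AnalyticOnNhd ℂ β U →
        (∀ q ∈ U, ‖β q - (n : ℂ) ^ 2 * (Real.pi : ℂ) ^ 2‖ ≤ ρ) →
        (∀ q ∈ U, β q = (n : ℂ) ^ 2 * (Real.pi : ℂ) ^ 2 + a (β q, q)) →
        ∀ q ∈ U, β q = α q := by
  set c : ℂ := (n : ℂ) ^ 2 * (Real.pi : ℂ) ^ 2
  have hn' : (1 : ℝ) ≤ n := by exact_mod_cast hn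
  have hsqrt : (n : ℝ) ^ ((1 : ℝ) / 2) ≤ n := by
    simpa using Real.rpow_le_rpow_of_exponent_le hn' (by norm_num : (1 : ℝ) / 2 ≤ 1)
  have hball := ball_subset_strip n
  obtain ⟨α, hαan, hα, huniq⟩ := exists_unique_analyticOnNhd_isFixedPt (g := fun p => c + a p)
    hU hρ.le (by linarith) (analyticOnNhd_const.add (ha.mono (prod_mono (hball.trans hSΩ) le_rfl)))
    fun q hq w hw => by
      rw [mem_closedBall, dist_eq_norm, add_sub_cancel_left]
      exact hbound w (hball hw) q hq
  refine ⟨α, hαan, fun q hq => mem_closedBall_iff_norm.mp (hα q hq).1,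
    fun q hq => (hα q hq).2.symm, fun β _ hβ hβfix q hq => ?_⟩
  exact huniq q hq (β q) (mem_closedBall_iff_norm.mpr (hβ q hq)) (hβfix q hq).symm

/-- Analytic fixed-point lemma: let `X` be a complex Banach space, `U ⊆ X` nonempty open,
`n ≥ 1`, and `0 < ρ ≤ 2√n`. If `a` is analytic on `Ω × U` for an open `Ω ⊇ S_n` with
`|a(λ,q)| ≤ ρ` on `S_n × U`, then there is a unique analytic map `α : U → ℂ` with
`|α(q) − n²π²| ≤ ρ` solving `α(q) = n²π² + a(α(q), q)` on `U`. -/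
theorem stmt_19 (X : Type*) [NormedAddCommGroup X] [NormedSpace ℂ X] [CompleteSpace X]
    (U : Set X) (hU : IsOpen U) (hUne : U.Nonempty)
    (n : ℕ) (hn : 1 ≤ n) (ρ : ℝ) (hρ : 0 < ρ) (hρn : ρ ≤ 2 * (n : ℝ) ^ ((1 : ℝ) / 2))
    (Ω : Set ℂ) (hΩ : IsOpen Ω) (hSΩ : strip n ⊆ Ω)
    (a : ℂ × X → ℂ) (ha : AnalyticOnNhd ℂ a (Ω ×ˢ U))
    (hbound : ∀ lam ∈ strip n, ∀ q ∈ U, ‖a (lam, q)‖ ≤ ρ) :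
    ∃ α : X → ℂ, AnalyticOnNhd ℂ α U ∧
      (∀ q ∈ U, ‖α q - (n : ℂ) ^ 2 * (Real.pi : ℂ) ^ 2‖ ≤ ρ) ∧
      (∀ q ∈ U, α q = (n : ℂ) ^ 2 * (Real.pi : ℂ) ^ 2 + a (α q, q)) ∧
      ∀ β : X → ℂ, AnalyticOnNhd ℂ β U →
        (∀ q ∈ U, ‖β q - (n : ℂ) ^ 2 * (Real.pi : ℂ) ^ 2‖ ≤ ρ) →
        (∀ q ∈ U, β q = (n : ℂ) ^ 2 * (Real.pi : ℂ) ^ 2 + a (β q, q)) →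
        ∀ q ∈ U, β q = α q :=
  stmt_19_general X U hU n hn ρ hρ hρn Ω hSΩ a ha hbound
end
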